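/- arXiv:math/0308281 — 4 statements merged into one kernel-verified Lean document; each statement's English description precedes it below -/
import Mathlib

section
/- Let Φ be an irreducible root system with Weyl group W, weight lattice Λ, ρ the half-sum of positive roots, and let q be a primitive 2l'L-th root of unity where L·⟨λ,μ⟩ ∈ ℤ for all weights λ,μ. Define qdim(λ) = ∏_{β>0} (q^{⟨λ+ρ,β⟩} - q^{-⟨λ+ρ,β⟩})/(q^{⟨ρ,β⟩} - q^{-⟨ρ,β⟩}). Then for any simple reflection σ = σ_{α_i} (acting by the translated action σ·λ = σ(λ+ρ) - ρ), whenever both λ and σ·λ are dominant, qdim(σ·λ) = -qdim(λ). -/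
open scoped RealInnerProductSpace

/-- The reflection in the hyperplane orthogonal to `α`. -/
noncomputable def rootReflection {E : Type*} [NormedAddCommGroup E]
    [InnerProductSpace ℝ E] (α : E) (x : E) : E :=
  x - (2 * ⟪x, α⟫ / ⟪α, α⟫) • α

/-- The quantum dimension given by the quantum Weyl character formula:
`qdim(λ) = ∏_{β>0} (q^⟨λ+ρ,β⟩ - q^{-⟨λ+ρ,β⟩})/(q^⟨ρ,β⟩ - q^{-⟨ρ,β⟩})`,
where `n x β` records the (integer) inner product `⟨x,β⟫`. -/
noncomputable def qdim {E K : Type*} [NormedAddCommGroup E] [InnerProductSpace ℝ E]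
    [Field K] (q : K) (Pos : Finset E) (n : E → E → ℤ) (ρ lam : E) : K :=
  ∏ β ∈ Pos, (q ^ (n (lam + ρ) β) - q ^ (-(n (lam + ρ) β))) /
    (q ^ (n ρ β) - q ^ (-(n ρ β)))

/-- with `q` a primitive `2l'L`-th root of unity, for a simple
reflection `σ = σ_{α}` acting by the translated action `σ·λ = σ(λ+ρ) - ρ`,
whenever both `λ` and `σ·λ` are dominant, `qdim(σ·λ) = -qdim(λ)`. -/
theorem qdim_simple_reflection_sign
    {E K : Type*} [NormedAddCommGroup E] [InnerProductSpace ℝ E] [Field K] [CharZero K]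
    (Pos Δ : Finset E) (ρ : E)
    (hΔ : ↑Δ ⊆ (Pos : Set E))
    (hρ : ρ = (2⁻¹ : ℝ) • ∑ β ∈ Pos, β)
    (hreflPos : ∀ α ∈ Δ, rootReflection α α = -α ∧
      Set.BijOn (rootReflection α) (↑Pos \ {α} : Set E) (↑Pos \ {α} : Set E))
    (Λ : AddSubgroup E) (hρΛ : ρ ∈ Λ)
    (hΛrefl : ∀ α ∈ Δ, ∀ x ∈ Λ, rootReflection α x ∈ Λ)
    (n : E → E → ℤ) (hn : ∀ x ∈ Λ, ∀ β ∈ Pos, (n x β : ℝ) = ⟪x, β⟫)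
    (l' L : ℕ) (hl' : 0 < l') (hL : 0 < L)
    (q : K) (hq : q ^ (2 * l' * L) = 1)
    (hprim : ∀ k : ℕ, 0 < k → k < 2 * l' * L → q ^ k ≠ 1)
    (α : E) (hα : α ∈ Δ) (lam : E) (hlam : lam ∈ Λ)
    (hdom : ∀ a ∈ Δ, 0 ≤ ⟪lam, a⟫)
    (hdom' : ∀ a ∈ Δ, 0 ≤ ⟪rootReflection α (lam + ρ) - ρ, a⟫) :
    qdim q Pos n ρ (rootReflection α (lam + ρ) - ρ) = - qdim q Pos n ρ lam := by
  classical
  have hαP : α ∈ Pos := hΔ hα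
  obtain ⟨hαneg, hbij⟩ := hreflPos α hα
  have hadj : ∀ x y : E, ⟪rootReflection α x, y⟫ = ⟪x, rootReflection α y⟫ := by
    intro x y
    simp only [rootReflection, inner_sub_left, inner_sub_right, real_inner_smul_left,
      real_inner_smul_right]
    rw [real_inner_comm α y]
    ring
  have hlρ : lam + ρ ∈ Λ := Λ.add_mem hlam hρΛ
  have hσlρ : rootReflection α (lam + ρ) ∈ Λ := hΛrefl α hα _ hlρ
  have hco : (↑(Pos.erase α) : Set E) = (↑Pos \ {α} : Set E) := Finset.coe_erase α Pos
  have hbij' : Set.BijOn (rootReflection α) (↑(Pos.erase α) : Set E)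
      (↑(Pos.erase α) : Set E) := by rw [hco]; exact hbij
  -- key integer identities
  have key1 : n (rootReflection α (lam + ρ)) α = - n (lam + ρ) α := by
    have h1 := hn _ hσlρ α hαP
    have h2 := hn _ hlρ α hαP
    have : ((n (rootReflection α (lam + ρ)) α : ℤ) : ℝ) = ((-(n (lam + ρ) α) : ℤ) : ℝ) := by
      push_cast
      rw [h1, h2, hadj, hαneg, inner_neg_right]
    exact_mod_cast this
  have key2 : ∀ β ∈ Pos.erase α,
      n (rootReflection α (lam + ρ)) β = n (lam + ρ) (rootReflection α β) := by
    intro β hβ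
    have hβP : β ∈ Pos := Finset.mem_of_mem_erase hβ
    have hσβ : rootReflection α β ∈ Pos.erase α := hbij'.mapsTo hβ
    have hσβP : rootReflection α β ∈ Pos := Finset.mem_of_mem_erase hσβ
    have h1 := hn _ hσlρ β hβP
    have h2 := hn _ hlρ _ hσβP
    have : ((n (rootReflection α (lam + ρ)) β : ℤ) : ℝ)
        = ((n (lam + ρ) (rootReflection α β) : ℤ) : ℝ) := by
      rw [h1, h2, hadj]
    exact_mod_cast this
  unfold qdim
  have hsimp : rootReflection α (lam + ρ) - ρ + ρ = rootReflection α (lam + ρ) := by abel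
  rw [hsimp]
  rw [Finset.prod_div_distrib, Finset.prod_div_distrib, ← neg_div]
  congr 1
  set F : ℤ → K := fun m => q ^ m - q ^ (-m) with hF
  have hFneg : ∀ m : ℤ, F (-m) = - F m := by
    intro m
    simp only [hF, neg_neg]
    ring
  calc ∏ β ∈ Pos, F (n (rootReflection α (lam + ρ)) β)
      = F (n (rootReflection α (lam + ρ)) α)
        * ∏ β ∈ Pos.erase α, F (n (rootReflection α (lam + ρ)) β) :=
        (Finset.mul_prod_erase Pos _ hαP).symm
    _ = (- F (n (lam + ρ) α)) * ∏ β ∈ Pos.erase α, F (n (lam + ρ) β) := by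
        rw [key1, hFneg]
        congr 1
        refine Finset.prod_nbij (rootReflection α) ?_ ?_ ?_ ?_
        · intro a ha
          exact hbij'.mapsTo ha
        · exact hbij'.injOn
        · exact hbij'.surjOn
        · intro a ha
          rw [key2 a ha]
    _ = - ∏ β ∈ Pos, F (n (lam + ρ) β) := by
        rw [neg_mul, Finset.mul_prod_erase Pos (fun β => F (n (lam + ρ) β)) hαP]
end

section
/- For an irreducible root system, if l' is not divisible by D (D prime, D ∈ {2,3}), then l'čΛ_r ∩ Λ_r = l'Λ_r, where čΛ_r is the coroot lattice and Λ_r the root lattice; whereas if D | l', then l'čΛ_r ⊆ Λ_r. -/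
open scoped RealInnerProductSpace Pointwise

/-!
With roots normalised so that short roots have `⟪β, β⟫ = 2` and long ones `⟪β, β⟫ = 2D`, a short
root is its own coroot and a long root is `D` times its coroot. Hence `Λ_r ≤ čΛ_r` and
`D • čΛ_r ≤ Λ_r`. For two lattices `A ≤ B` with `d • B ≤ A` these sandwich relations alone give
`l • B ≤ A` when `d ∣ l`, and `l • B ⊓ A = l • A` when `d` and `l` are coprime: if `l • y ∈ A`
with `y ∈ B`, then `y = a • (d • y) + b • (l • y) ∈ A` for a Bézout relation `a d + b l = 1`.
-/

namespace AddSubgroup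

theorem pointwise_smul_mono {α M : Type*} [Monoid α] [AddGroup M] [DistribMulAction α M]
    (a : α) {S T : AddSubgroup M} (h : S ≤ T) : a • S ≤ a • T :=
  map_mono h

variable {M : Type*} [AddCommGroup M] {A B : AddSubgroup M} {d l : ℤ}

theorem zsmul_pointwise_le_self (l : ℤ) (A : AddSubgroup M) : l • A ≤ A := by
  rintro - ⟨y, hy, rfl⟩
  exact A.zsmul_mem hy l

theorem zsmul_pointwise_le_of_dvd (hBA : d • B ≤ A) (hdl : d ∣ l) : l • B ≤ A := by
  obtain ⟨m, rfl⟩ := hdl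
  rw [mul_comm, mul_smul]
  exact (pointwise_smul_mono m hBA).trans (zsmul_pointwise_le_self m A)

theorem zsmul_pointwise_inf_eq_of_isCoprime (hAB : A ≤ B) (hBA : d • B ≤ A)
    (hdl : IsCoprime d l) : l • B ⊓ A = l • A := by
  refine le_antisymm ?_ (le_inf (pointwise_smul_mono l hAB) (zsmul_pointwise_le_self l A))
  rintro - ⟨⟨y, hyB, rfl⟩, hlyA⟩
  obtain ⟨a, b, hab⟩ := hdl
  have hy : y = a • d • y + b • l • y := by
    rw [smul_smul, smul_smul, ← add_smul, hab, one_smul]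
  refine ⟨y, ?_, rfl⟩
  rw [hy]
  exact A.add_mem (A.zsmul_mem (hBA ⟨y, hyB, rfl⟩) a) (A.zsmul_mem hlyA b)

end AddSubgroup

section Coroots

variable {E : Type*} [NormedAddCommGroup E] [InnerProductSpace ℝ E]

def coroots (Φ : Set E) : Set E :=
  {x | ∃ β ∈ Φ, x = (2 / ⟪β, β⟫) • β}

theorem coroot_eq_self_of_inner_self_eq_two {β : E} (h : ⟪β, β⟫ = 2) :
    (2 / ⟪β, β⟫) • β = β := by
  rw [h, div_self two_ne_zero, one_smul]

theorem zsmul_coroot_eq_self_of_inner_self_eq {β : E} {D : ℕ} (hD : D ≠ 0)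
    (h : ⟪β, β⟫ = 2 * D) : (D : ℤ) • (2 / ⟪β, β⟫) • β = β := by
  have hD' : (D : ℝ) ≠ 0 := Nat.cast_ne_zero.mpr hD
  rw [h, ← Int.cast_smul_eq_zsmul ℝ, smul_smul, Int.cast_natCast,
    show (D : ℝ) * (2 / (2 * D)) = 1 by field_simp, one_smul]

variable {Φ : Set E} {D : ℕ}

theorem closure_le_closure_coroots (hD : D ≠ 0)
    (hlen : ∀ β ∈ Φ, ⟪β, β⟫ = 2 ∨ ⟪β, β⟫ = 2 * D) :
    AddSubgroup.closure Φ ≤ AddSubgroup.closure (coroots Φ) := by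
  rw [AddSubgroup.closure_le]
  intro β hβ
  have hcoroot : (2 / ⟪β, β⟫) • β ∈ AddSubgroup.closure (coroots Φ) :=
    AddSubgroup.subset_closure ⟨β, hβ, rfl⟩
  rcases hlen β hβ with hshort | hlong
  · rwa [coroot_eq_self_of_inner_self_eq_two hshort] at hcoroot
  · rw [← zsmul_coroot_eq_self_of_inner_self_eq hD hlong]
    exact AddSubgroup.zsmul_mem _ hcoroot _

theorem zsmul_closure_coroots_le (hD : D ≠ 0)
    (hlen : ∀ β ∈ Φ, ⟪β, β⟫ = 2 ∨ ⟪β, β⟫ = 2 * D) :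
    (D : ℤ) • AddSubgroup.closure (coroots Φ) ≤ AddSubgroup.closure Φ := by
  rintro - ⟨x, hx, rfl⟩
  refine (AddSubgroup.closure_le
    (K := (AddSubgroup.closure Φ).comap (zsmulAddGroupHom (D : ℤ)))).mpr ?_ hx
  rintro - ⟨β, hβ, rfl⟩
  change (D : ℤ) • (2 / ⟪β, β⟫) • β ∈ AddSubgroup.closure Φ
  rcases hlen β hβ with hshort | hlong
  · rw [coroot_eq_self_of_inner_self_eq_two hshort]
    exact AddSubgroup.zsmul_mem _ (AddSubgroup.subset_closure hβ) _
  · rw [zsmul_coroot_eq_self_of_inner_self_eq hD hlong]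
    exact AddSubgroup.subset_closure hβ

end Coroots

theorem coroot_lattice_intersection_general
    {E : Type*} [NormedAddCommGroup E] [InnerProductSpace ℝ E]
    (Φ : Finset E)
    (D : ℕ) (hD : Nat.Prime D)
    (hlen : ∀ β ∈ Φ, ⟪β, β⟫ = 2 ∨ ⟪β, β⟫ = 2 * D)
    (Λr coΛr : AddSubgroup E)
    (hΛr : Λr = AddSubgroup.closure (↑Φ : Set E))
    (hcoΛr : coΛr = AddSubgroup.closure {x : E | ∃ β ∈ Φ, x = (2 / ⟪β, β⟫) • β})
    (l' : ℕ) :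
    (¬ (D ∣ l') → ((l' : ℤ) • coΛr) ⊓ Λr = (l' : ℤ) • Λr) ∧
    ((D ∣ l') → ((l' : ℤ) • coΛr) ≤ Λr) := by
  subst hΛr hcoΛr
  have hroot_le := closure_le_closure_coroots hD.ne_zero hlen
  have hcoroot_le := zsmul_closure_coroots_le hD.ne_zero hlen
  refine ⟨fun hndvd => ?_, fun hdvd => ?_⟩
  · have hcop : IsCoprime (D : ℤ) l' :=
      Nat.isCoprime_iff_coprime.mpr ((Nat.Prime.coprime_iff_not_dvd hD).mpr hndvd)
    exact AddSubgroup.zsmul_pointwise_inf_eq_of_isCoprime hroot_le hcoroot_le hcop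
  · exact AddSubgroup.zsmul_pointwise_le_of_dvd hcoroot_le (Int.natCast_dvd_natCast.mpr hdvd)

/-- for an irreducible root system with long/short squared-length
ratio `D` (prime, `D ∈ {2,3}`): if `D ∤ l'` then `l'čΛ_r ∩ Λ_r = l'Λ_r`, where
`čΛ_r` is the coroot lattice and `Λ_r` the root lattice; whereas if `D ∣ l'` then
`l'čΛ_r ⊆ Λ_r`. -/
theorem coroot_lattice_intersection
    {E : Type*} [NormedAddCommGroup E] [InnerProductSpace ℝ E]
    (Φ : Finset E)
    (h0 : (0 : E) ∉ Φ)
    (hrefl : ∀ α ∈ Φ, ∀ β ∈ Φ, rootReflection α β ∈ Φ)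
    (hint : ∀ α ∈ Φ, ∀ β ∈ Φ, ∃ n : ℤ, 2 * ⟪β, α⟫ / ⟪α, α⟫ = (n : ℝ))
    (hred : ∀ α ∈ Φ, ∀ c : ℝ, c • α ∈ Φ → c = 1 ∨ c = -1)
    (hirr : ¬ ∃ Φ₁ Φ₂ : Set E, Φ₁.Nonempty ∧ Φ₂.Nonempty ∧ Φ₁ ∪ Φ₂ = ↑Φ ∧
      Disjoint Φ₁ Φ₂ ∧ ∀ α ∈ Φ₁, ∀ β ∈ Φ₂, ⟪α, β⟫ = 0)
    (D : ℕ) (hD : Nat.Prime D) (hD23 : D = 2 ∨ D = 3)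
    (hlen : ∀ β ∈ Φ, ⟪β, β⟫ = 2 ∨ ⟪β, β⟫ = 2 * D)
    (Λr coΛr : AddSubgroup E)
    (hΛr : Λr = AddSubgroup.closure (↑Φ : Set E))
    (hcoΛr : coΛr = AddSubgroup.closure {x : E | ∃ β ∈ Φ, x = (2 / ⟪β, β⟫) • β})
    (l' : ℕ) (hl' : 0 < l') :
    (¬ (D ∣ l') → ((l' : ℤ) • coΛr) ⊓ Λr = (l' : ℤ) • Λr) ∧
    ((D ∣ l') → ((l' : ℤ) • coΛr) ≤ Λr) :=
  coroot_lattice_intersection_general Φ D hD hlen Λr coΛr hΛr hcoΛr l'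
end

section
/- The affine Weyl group W_l (as above, W ⋉ l'čΛ_r if D | l', W ⋉ l'Λ_r otherwise) is exactly the largest subgroup of W^† = W ⋉ (l/2)čΛ_r that preserves the root lattice Λ_r under the translated action σ·λ = σ(λ+ρ)-ρ. In particular W_l = W^† when 2D divides l. -/
open scoped RealInnerProductSpace Pointwise

/-!
Write `s_α` for the reflections and `M` for `l'čΛ_r` or `l'Λ_r`. The translated action of
`s_α` is `s_α` followed by the translation by `s_α ρ - ρ`. Reindexing the positive roots by
`β ↦ ±s_α β` (the sign making it positive) gives `s_α ρ - ρ = ∑_{β > 0, s_α β < 0} s_α β ∈ Λ_r`,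
so `W_l`, whose translations lie in `M ⊆ Λ_r`, preserves `Λ_r` under the translated action.
Conversely every element of `W^†` is `t_v ∘ w` with `w ∈ W` and `v ∈ (l/2)čΛ_r`; evaluating at `0`
shows it preserves `Λ_r` iff `v ∈ Λ_r`, so it remains to see `(l/2)čΛ_r ∩ Λ_r = M`. This follows
from `Λ_r ⊆ čΛ_r`, `D čΛ_r ⊆ Λ_r` and two coprimality arguments: `l` odd against `2`, and the
prime `D` against `l'`.
-/

namespace AffineWeylGroup

section Reflection

variable {E : Type*} [NormedAddCommGroup E] [InnerProductSpace ℝ E]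

noncomputable def rootReflectionₗ (α : E) : E →ₗ[ℝ] E where
  toFun := rootReflection α
  map_add' x y := by
    simp only [rootReflection, inner_add_left, mul_add, add_div, add_smul]
    abel
  map_smul' c x := by
    simp only [rootReflection, real_inner_smul_left, smul_sub, smul_smul, RingHom.id_apply]
    congr 2
    ring

@[simp]
lemma rootReflectionₗ_apply (α x : E) : rootReflectionₗ α x = rootReflection α x := rfl

lemma rootReflection_self {α : E} (hα : α ≠ 0) : rootReflection α α = -α := by
  rw [rootReflection, mul_div_assoc, div_self (inner_self_ne_zero.2 hα), mul_one, two_smul]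
  abel

lemma rootReflection_involutive {α : E} (hα : α ≠ 0) :
    Function.Involutive (rootReflection α) := by
  intro x
  have h := (rootReflectionₗ α).map_sub x ((2 * ⟪x, α⟫ / ⟪α, α⟫) • α)
  simp only [rootReflectionₗ_apply, map_smul] at h
  change rootReflection α (x - _ • α) = x
  rw [h, rootReflection_self hα, smul_neg, sub_neg_eq_add, rootReflection, sub_add_cancel]

lemma inner_rootReflection {α : E} (hα : α ≠ 0) (x y : E) :
    ⟪rootReflection α x, rootReflection α y⟫ = ⟪x, y⟫ := by
  have : ⟪α, α⟫ ≠ 0 := inner_self_ne_zero.2 hα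
  simp only [rootReflection, inner_sub_left, inner_sub_right, real_inner_smul_left,
    real_inner_smul_right, real_inner_comm α x, real_inner_comm α y]
  field_simp
  ring

lemma rootReflection_coroot {α : E} (hα : α ≠ 0) (β : E) :
    rootReflection α ((2 / ⟪β, β⟫) • β) =
      (2 / ⟪rootReflection α β, rootReflection α β⟫) • rootReflection α β := by
  rw [← rootReflectionₗ_apply, map_smul, rootReflectionₗ_apply, inner_rootReflection hα]

lemma rootReflection_mem_closure_iff {α : E} (hα : α ≠ 0) {S : Set E}
    (hS : Set.MapsTo (rootReflection α) S S) {x : E} :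
    rootReflection α x ∈ AddSubgroup.closure S ↔ x ∈ AddSubgroup.closure S := by
  have hmaps : ∀ y ∈ AddSubgroup.closure S, rootReflection α y ∈ AddSubgroup.closure S :=
    fun _ hy => (AddSubgroup.closure_le ((AddSubgroup.closure S).comap
      (rootReflectionₗ α).toAddMonoidHom)).2 (fun _ hz => AddSubgroup.subset_closure (hS hz)) hy
  refine ⟨fun h => ?_, hmaps x⟩
  rw [← rootReflection_involutive hα x]
  exact hmaps _ h

end Reflection

section SignedPermutation

lemma sum_apply_eq_sum_add_two_nsmul {G : Type*} [AddCommGroup G] [DecidableEq G]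
    (P : Finset G) {s : G → G} (hs : Function.Involutive s) (hs_neg : ∀ x, s (-x) = -s x)
    (hP : ∀ β ∈ P, -β ∉ P) (hsP : ∀ β ∈ P, s β ∈ P ∨ -s β ∈ P) :
    ∑ β ∈ P, s β = ∑ β ∈ P, β + 2 • ∑ β ∈ P with s β ∉ P, s β := by
  set f : G → G := fun β => if s β ∈ P then s β else -s β with hf
  have hfP : ∀ β ∈ P, f β ∈ P := by
    intro β hβ
    by_cases h : s β ∈ P
    · simp [hf, h]
    · simpa [hf, h] using (hsP β hβ).resolve_left h
  have hff : ∀ β ∈ P, f (f β) = β := by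
    intro β hβ
    by_cases h : s β ∈ P
    · simp [hf, h, hs β, hβ]
    · simp [hf, h, hs_neg, hs β, hP β hβ]
  have hsum : ∑ β ∈ P, f β = ∑ β ∈ P, β :=
    Finset.sum_nbij' f f hfP hfP hff hff fun _ _ => rfl
  calc ∑ β ∈ P, s β = ∑ β ∈ P, (f β + if s β ∈ P then 0 else 2 • s β) := by
        refine Finset.sum_congr rfl fun β _ => ?_
        by_cases h : s β ∈ P
        · simp [hf, h]
        · simp only [hf, h, if_false, two_nsmul]
          abel
    _ = _ := by
        rw [Finset.sum_add_distrib, hsum, Finset.sum_ite, Finset.sum_const_zero, zero_add,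
          Finset.smul_sum]

lemma map_half_sum_sub_half_sum {E : Type*} [AddCommGroup E] [Module ℝ E] [DecidableEq E]
    (P : Finset E) {s : E →ₗ[ℝ] E} (hs : Function.Involutive s) (hP : ∀ β ∈ P, -β ∉ P)
    (hsP : ∀ β ∈ P, s β ∈ P ∨ -s β ∈ P) :
    s ((2⁻¹ : ℝ) • ∑ β ∈ P, β) - (2⁻¹ : ℝ) • ∑ β ∈ P, β = ∑ β ∈ P with s β ∉ P, s β := by
  rw [map_smul, map_sum, sum_apply_eq_sum_add_two_nsmul P hs (map_neg s) hP hsP, smul_add,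
    add_sub_cancel_left, ← Nat.cast_smul_eq_nsmul ℝ, smul_smul]
  norm_num

end SignedPermutation

section Lattice

lemma mem_of_zsmul_mem_of_isCoprime {G : Type*} [AddCommGroup G] (L : AddSubgroup G)
    {a b : ℤ} (hab : IsCoprime a b) {x : G} (ha : a • x ∈ L) (hb : b • x ∈ L) : x ∈ L := by
  obtain ⟨u, v, huv⟩ := hab
  have hx : x = u • a • x + v • b • x := by
    rw [smul_smul, smul_smul, ← add_smul, huv, one_smul]
  rw [hx]
  exact add_mem (zsmul_mem ha u) (zsmul_mem hb v)

variable {E : Type*} [AddCommGroup E] [Module ℝ E] {l l' : ℕ}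

lemma intCast_smul_addSubgroup (n : ℤ) (C : AddSubgroup E) : (n : ℝ) • C = n • C := by
  ext x
  simp only [AddSubgroup.mem_smul_pointwise_iff_exists, Int.cast_smul_eq_zsmul]

lemma level_eq_of_odd (hl' : l' = if Odd l then l else l / 2) (hl : Odd l) : l' = l := by
  rw [hl', if_pos hl]

lemma two_mul_level_of_not_odd (hl' : l' = if Odd l then l else l / 2) (hl : ¬Odd l) :
    2 * l' = l := by
  rw [hl', if_neg hl]
  exact Nat.two_mul_div_two_of_even (Nat.not_odd_iff_even.1 hl)

lemma zsmul_le_half_smul (C : AddSubgroup E) (hl' : l' = if Odd l then l else l / 2) :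
    (l' : ℤ) • C ≤ ((l : ℝ) / 2) • C := by
  rw [← intCast_smul_addSubgroup]
  intro x hx
  obtain ⟨u, hu, rfl⟩ := (AddSubgroup.mem_smul_pointwise_iff_exists _ _ _).1 hx
  rw [AddSubgroup.mem_smul_pointwise_iff_exists]
  by_cases hl : Odd l
  · refine ⟨(2 : ℝ) • u, by simpa [two_smul] using add_mem hu hu, ?_⟩
    rw [level_eq_of_odd hl' hl, smul_smul]
    congr 1
    push_cast
    ring
  · exact ⟨u, hu, by simp [← two_mul_level_of_not_odd hl' hl]⟩

lemma mem_zsmul_of_mem_half_smul (C : AddSubgroup E) (hl' : l' = if Odd l then l else l / 2)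
    {v : E} (hv : v ∈ ((l : ℝ) / 2) • C) (hvC : v ∈ C) : v ∈ (l' : ℤ) • C := by
  obtain ⟨u, hu, rfl⟩ := (AddSubgroup.mem_smul_pointwise_iff_exists _ _ _).1 hv
  rw [← intCast_smul_addSubgroup, AddSubgroup.mem_smul_pointwise_iff_exists]
  by_cases hl : Odd l
  · -- `u / 2 ∈ C` since `2 • (u / 2) = u ∈ C`, `l • (u / 2) = v ∈ C` and `l` is odd.
    have hcop : IsCoprime (l : ℤ) 2 := Nat.isCoprime_iff_coprime.2 (Nat.coprime_two_right.2 hl)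
    refine ⟨(2⁻¹ : ℝ) • u, mem_of_zsmul_mem_of_isCoprime C hcop ?_ ?_, ?_⟩
    · rwa [← Int.cast_smul_eq_zsmul ℝ, smul_smul, Int.cast_natCast, ← div_eq_mul_inv]
    · rwa [← Int.cast_smul_eq_zsmul ℝ, smul_smul, Int.cast_ofNat, mul_inv_cancel₀ two_ne_zero,
        one_smul]
    · rw [level_eq_of_odd hl' hl, smul_smul, Int.cast_natCast, ← div_eq_mul_inv]
  · exact ⟨u, hu, by simp [← two_mul_level_of_not_odd hl' hl]⟩

end Lattice

/-- With `n = l'`, `Λ = Λ_r` and `C = čΛ_r`, the translation lattice of `W_l`. -/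
def levelLattice {G : Type*} [AddCommGroup G] (D n : ℕ) (Λ C : AddSubgroup G) :
    AddSubgroup G :=
  if D ∣ n then (n : ℤ) • C else (n : ℤ) • Λ

section LevelLattice

variable {G : Type*} [AddCommGroup G] {D n : ℕ} {Λ C : AddSubgroup G}

lemma levelLattice_le (hCΛ : ∀ x ∈ C, (D : ℤ) • x ∈ Λ) : levelLattice D n Λ C ≤ Λ := by
  intro x hx
  unfold levelLattice at hx
  split_ifs at hx with hDn <;>
    obtain ⟨u, hu, rfl⟩ := (AddSubgroup.mem_smul_pointwise_iff_exists _ _ _).1 hx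
  · obtain ⟨k, rfl⟩ := hDn
    rw [Nat.cast_mul, mul_comm, mul_smul]
    exact zsmul_mem (hCΛ u hu) _
  · exact zsmul_mem hu _

lemma levelLattice_le_zsmul (hΛC : Λ ≤ C) : levelLattice D n Λ C ≤ (n : ℤ) • C := by
  unfold levelLattice
  split_ifs
  · exact le_rfl
  · intro x hx
    obtain ⟨u, hu, rfl⟩ := (AddSubgroup.mem_smul_pointwise_iff_exists _ _ _).1 hx
    exact AddSubgroup.smul_mem_pointwise_smul _ _ _ (hΛC hu)

lemma zsmul_inf_le_levelLattice (hD : D = 1 ∨ D.Prime) (hCΛ : ∀ x ∈ C, (D : ℤ) • x ∈ Λ) :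
    (n : ℤ) • C ⊓ Λ ≤ levelLattice D n Λ C := by
  rintro v ⟨hv, hvΛ⟩
  unfold levelLattice
  split_ifs with hDn
  · exact hv
  · obtain ⟨u, hu, rfl⟩ := (AddSubgroup.mem_smul_pointwise_iff_exists _ _ _).1 hv
    have hDp : D.Prime := hD.resolve_left (by rintro rfl; exact hDn (one_dvd n))
    have hcop : IsCoprime (D : ℤ) n :=
      Nat.isCoprime_iff_coprime.2 (hDp.coprime_iff_not_dvd.2 hDn)
    exact AddSubgroup.smul_mem_pointwise_smul _ _ _
      (mem_of_zsmul_mem_of_isCoprime Λ hcop (hCΛ u hu) hvΛ)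

end LevelLattice

section HalfLevel

variable {E : Type*} [AddCommGroup E] [Module ℝ E] {D l l' : ℕ} {Λ C : AddSubgroup E}

lemma half_smul_inf_le_levelLattice (hl' : l' = if Odd l then l else l / 2)
    (hD : D = 1 ∨ D.Prime) (hΛC : Λ ≤ C) (hCΛ : ∀ x ∈ C, (D : ℤ) • x ∈ Λ) :
    ((l : ℝ) / 2) • C ⊓ Λ ≤ levelLattice D l' Λ C := fun _ hv =>
  zsmul_inf_le_levelLattice hD hCΛ ⟨mem_zsmul_of_mem_half_smul _ hl' hv.1 (hΛC hv.2), hv.2⟩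

lemma levelLattice_eq_half_smul (hl' : l' = if Odd l then l else l / 2) (h2Dl : 2 * D ∣ l) :
    levelLattice D l' Λ C = ((l : ℝ) / 2) • C := by
  have hl : ¬Odd l :=
    Nat.not_odd_iff_even.2 (even_iff_two_dvd.2 ((dvd_mul_right 2 D).trans h2Dl))
  have h2l' := two_mul_level_of_not_odd hl' hl
  have hDl' : D ∣ l' := (Nat.mul_dvd_mul_iff_left two_pos).1 (h2l' ▸ h2Dl)
  rw [levelLattice, if_pos hDl', ← intCast_smul_addSubgroup, ← h2l']
  push_cast
  ring_nf

end HalfLevel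

section RootSystem

variable {E : Type*} [NormedAddCommGroup E] [InnerProductSpace ℝ E] {Φ Δ Pos : Finset E}
  {D : ℕ}

def coroots (Φ : Finset E) : Set E := {x | ∃ β ∈ Φ, x = (2 / ⟪β, β⟫) • β}

abbrev rootLattice (Φ : Finset E) : AddSubgroup E := AddSubgroup.closure (Φ : Set E)

abbrev corootLattice (Φ : Finset E) : AddSubgroup E := AddSubgroup.closure (coroots Φ)

lemma neg_mem_of_rootReflection_mem (h0 : (0 : E) ∉ Φ)
    (hrefl : ∀ α ∈ Φ, ∀ β ∈ Φ, rootReflection α β ∈ Φ) {β : E} (hβ : β ∈ Φ) : -β ∈ Φ := by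
  simpa [rootReflection_self (ne_of_mem_of_not_mem hβ h0)] using hrefl β hβ β hβ

lemma mem_or_neg_mem_of_decomp (hneg : ∀ β ∈ Φ, -β ∈ Φ)
    (hdecomp : ∀ β ∈ Φ, ∃ c : Δ → ℝ, (β = ∑ a, c a • (a : E)) ∧
      ((∀ a, 0 ≤ c a) ∨ (∀ a, c a ≤ 0)))
    (hPos : ∀ β : E, β ∈ Pos ↔ β ∈ Φ ∧
      ∃ c : Δ → ℝ, (∀ a, 0 ≤ c a) ∧ β = ∑ a, c a • (a : E))
    {β : E} (hβ : β ∈ Φ) : β ∈ Pos ∨ -β ∈ Pos := by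
  obtain ⟨c, rfl, hc | hc⟩ := hdecomp β hβ
  · exact .inl ((hPos _).2 ⟨hβ, c, hc, rfl⟩)
  · refine .inr ((hPos _).2 ⟨hneg _ hβ, -c, fun a => neg_nonneg.2 (hc a), ?_⟩)
    simp [neg_smul, Finset.sum_neg_distrib]

lemma neg_notMem_of_linearIndependent (h0 : (0 : E) ∉ Φ)
    (hbasis : LinearIndependent ℝ (fun a : Δ => (a : E)))
    (hPos : ∀ β : E, β ∈ Pos ↔ β ∈ Φ ∧
      ∃ c : Δ → ℝ, (∀ a, 0 ≤ c a) ∧ β = ∑ a, c a • (a : E))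
    {β : E} (hβ : β ∈ Pos) : -β ∉ Pos := by
  intro hβ'
  obtain ⟨hβΦ, c, hc, hcβ⟩ := (hPos β).1 hβ
  obtain ⟨-, d, hd, hdβ⟩ := (hPos (-β)).1 hβ'
  have hcd : ∑ a, (c a + d a) • (a : E) = 0 := by
    simp only [add_smul, Finset.sum_add_distrib, ← hcβ, ← hdβ, add_neg_cancel]
  have hc0 : c = 0 := funext fun a => show c a = 0 by
    have := Fintype.linearIndependent_iff.1 hbasis _ hcd a
    linarith [hc a, hd a]
  exact ne_of_mem_of_not_mem hβΦ h0 (by simp [hcβ, hc0])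

lemma rootReflection_rho_sub_rho_mem (h0 : (0 : E) ∉ Φ)
    (hrefl : ∀ α ∈ Φ, ∀ β ∈ Φ, rootReflection α β ∈ Φ)
    (hbasis : LinearIndependent ℝ (fun a : Δ => (a : E)))
    (hdecomp : ∀ β ∈ Φ, ∃ c : Δ → ℝ, (β = ∑ a, c a • (a : E)) ∧
      ((∀ a, 0 ≤ c a) ∨ (∀ a, c a ≤ 0)))
    (hPos : ∀ β : E, β ∈ Pos ↔ β ∈ Φ ∧
      ∃ c : Δ → ℝ, (∀ a, 0 ≤ c a) ∧ β = ∑ a, c a • (a : E))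
    {ρ : E} (hρ : ρ = (2⁻¹ : ℝ) • ∑ β ∈ Pos, β) {α : E} (hα : α ∈ Φ) :
    rootReflection α ρ - ρ ∈ rootLattice Φ := by
  classical
  have hPosΦ : ∀ β ∈ Pos, β ∈ Φ := fun β hβ => ((hPos β).1 hβ).1
  have hsum := map_half_sum_sub_half_sum Pos (s := rootReflectionₗ α)
    (rootReflection_involutive (ne_of_mem_of_not_mem hα h0))
    (fun β hβ => neg_notMem_of_linearIndependent h0 hbasis hPos hβ)
    (fun β hβ => mem_or_neg_mem_of_decomp (fun _ => neg_mem_of_rootReflection_mem h0 hrefl)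
      hdecomp hPos (hrefl α hα β (hPosΦ β hβ)))
  rw [hρ, ← rootReflectionₗ_apply, hsum]
  exact AddSubgroup.sum_mem _ fun β hβ =>
    AddSubgroup.subset_closure (hrefl α hα β (hPosΦ β (Finset.mem_filter.1 hβ).1))

lemma coroot_eq_self {β : E} (hβ : ⟪β, β⟫ = 2) : (2 / ⟪β, β⟫) • β = β := by
  rw [hβ, div_self two_ne_zero, one_smul]

lemma zsmul_coroot_eq {β : E} (hD : D ≠ 0) (hβ : ⟪β, β⟫ = 2 * D) :
    (D : ℤ) • (2 / ⟪β, β⟫) • β = β := by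
  rw [← Int.cast_smul_eq_zsmul ℝ, smul_smul, hβ, Int.cast_natCast]
  field_simp
  exact one_smul ℝ β

lemma rootLattice_le_corootLattice (hD : D ≠ 0)
    (hlen : ∀ β ∈ Φ, ⟪β, β⟫ = 2 ∨ ⟪β, β⟫ = 2 * D) : rootLattice Φ ≤ corootLattice Φ := by
  refine (AddSubgroup.closure_le _).2 fun β hβ => ?_
  have hcoroot : (2 / ⟪β, β⟫) • β ∈ corootLattice Φ := AddSubgroup.subset_closure ⟨β, hβ, rfl⟩
  rcases hlen β hβ with h | h
  · rwa [coroot_eq_self h] at hcoroot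
  · rw [SetLike.mem_coe, ← zsmul_coroot_eq hD h]
    exact zsmul_mem hcoroot _

lemma zsmul_mem_rootLattice (hD : D ≠ 0) (hlen : ∀ β ∈ Φ, ⟪β, β⟫ = 2 ∨ ⟪β, β⟫ = 2 * D)
    {x : E} (hx : x ∈ corootLattice Φ) : (D : ℤ) • x ∈ rootLattice Φ := by
  refine (AddSubgroup.closure_le ((rootLattice Φ).comap (zsmulAddGroupHom (D : ℤ)))).2 ?_ hx
  rintro _ ⟨β, hβ, rfl⟩
  change (D : ℤ) • (2 / ⟪β, β⟫) • β ∈ rootLattice Φ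
  rcases hlen β hβ with h | h
  · rw [coroot_eq_self h]
    exact zsmul_mem (AddSubgroup.subset_closure hβ) _
  · rw [zsmul_coroot_eq hD h]
    exact AddSubgroup.subset_closure hβ

end RootSystem

section AffineGroup

open Equiv MulAction

variable {E : Type*} [AddCommGroup E]

/-- `W ⋉ T` when `R` generates `W`. -/
def affineSubgroup (R : Set (Perm E)) (T : AddSubgroup E) : Subgroup (Perm E) :=
  Subgroup.closure (R ∪ {g | ∃ m ∈ T, ∀ x, g x = x + m})

variable {R : Set (Perm E)} {T T' Λ : AddSubgroup E} {ρ : E}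

lemma affineSubgroup_mono (h : T ≤ T') : affineSubgroup R T ≤ affineSubgroup R T' :=
  Subgroup.closure_mono (Set.union_subset_union_right _ fun _ ⟨m, hm, hg⟩ => ⟨m, h hm, hg⟩)

lemma exists_eq_add_of_mem_affineSubgroup (hRinv : ∀ r ∈ R, r⁻¹ ∈ R)
    (hRadd : ∀ r ∈ R, ∀ x y, r (x + y) = r x + r y) (hRT : ∀ r ∈ R, ∀ v ∈ T, r v ∈ T)
    {g : Perm E} (hg : g ∈ affineSubgroup R T) :
    ∃ w ∈ Subgroup.closure R, ∃ v ∈ T, ∀ x, g x = w x + v := by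
  have hmul : ∀ h ∈ R ∪ {g | ∃ m ∈ T, ∀ x, g x = x + m}, ∀ g : Perm E,
      (∃ w ∈ Subgroup.closure R, ∃ v ∈ T, ∀ x, g x = w x + v) →
      ∃ w ∈ Subgroup.closure R, ∃ v ∈ T, ∀ x, (h * g) x = w x + v := by
    rintro h (hr | ⟨m, hm, hh⟩) g ⟨w, hw, v, hv, hg⟩
    · exact ⟨h * w, mul_mem (Subgroup.subset_closure hr) hw, h v, hRT h hr v hv,
        fun x => by rw [Perm.mul_apply, hg, hRadd h hr, Perm.mul_apply]⟩
    · exact ⟨w, hw, v + m, add_mem hv hm, fun x => by rw [Perm.mul_apply, hh, hg, add_assoc]⟩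
  induction hg using Subgroup.closure_induction_left with
  | one => exact ⟨1, one_mem _, 0, zero_mem _, fun x => (add_zero x).symm⟩
  | mul_left h hh g _ ih => exact hmul h hh g ih
  | inv_mul_cancel h hh g _ ih =>
    refine hmul _ ?_ g ih
    rcases hh with hr | ⟨m, hm, hh⟩
    · exact .inl (hRinv h hr)
    · exact .inr ⟨-m, neg_mem hm, fun x => Perm.inv_eq_iff_eq.2 (by rw [hh, neg_add_cancel_right])⟩

-- `σ` preserves `Λ` under the translated action iff it preserves the coset `ρ + Λ`.
lemma closure_le_stabilizer (hR : ∀ r ∈ R, ∀ x, r x - ρ ∈ Λ ↔ x - ρ ∈ Λ) :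
    Subgroup.closure R ≤ stabilizer (Perm E) {x | x - ρ ∈ Λ} :=
  (Subgroup.closure_le _).2 fun r hr => mem_stabilizer_set.2 (hR r hr)

lemma affineSubgroup_le_stabilizer (hR : ∀ r ∈ R, ∀ x, r x - ρ ∈ Λ ↔ x - ρ ∈ Λ) (hT : T ≤ Λ) :
    affineSubgroup R T ≤ stabilizer (Perm E) {x | x - ρ ∈ Λ} := by
  refine (Subgroup.closure_le _).2 (Set.union_subset
    (fun r hr => closure_le_stabilizer hR (Subgroup.subset_closure hr)) ?_)
  rintro g ⟨m, hm, hg⟩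
  refine mem_stabilizer_set.2 fun x => ?_
  change g x - ρ ∈ Λ ↔ x - ρ ∈ Λ
  rw [hg, add_sub_right_comm]
  exact add_mem_cancel_right (hT hm)

lemma mem_affineSubgroup_of_sub_mem (hRinv : ∀ r ∈ R, r⁻¹ ∈ R)
    (hRadd : ∀ r ∈ R, ∀ x y, r (x + y) = r x + r y) (hRT' : ∀ r ∈ R, ∀ v ∈ T', r v ∈ T')
    (hRΛ : ∀ r ∈ R, ∀ x, r x - ρ ∈ Λ ↔ x - ρ ∈ Λ) (hT : T' ⊓ Λ ≤ T) {g : Perm E}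
    (hg : g ∈ affineSubgroup R T') (hgρ : g ρ - ρ ∈ Λ) : g ∈ affineSubgroup R T := by
  obtain ⟨w, hw, v, hv, hgwv⟩ := exists_eq_add_of_mem_affineSubgroup hRinv hRadd hRT' hg
  have hwρ : w ρ - ρ ∈ Λ := (mem_stabilizer_set.1 (closure_le_stabilizer hRΛ hw) ρ).2 (by simp)
  have hvΛ : v ∈ Λ := by simpa [hgwv] using sub_mem hgρ hwρ
  rw [show g = Equiv.addRight v * w from Equiv.ext hgwv]
  exact mul_mem (Subgroup.subset_closure (.inr ⟨v, hT ⟨hv, hvΛ⟩, fun _ => rfl⟩))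
    (Subgroup.closure_mono Set.subset_union_left hw)

end AffineGroup

section Reflections

open Equiv

variable {E : Type*} [NormedAddCommGroup E] [InnerProductSpace ℝ E] {Φ : Finset E}
  {g : Perm E}

def reflections (Φ : Finset E) : Set (Perm E) := {g | ∃ α ∈ Φ, ∀ x, g x = rootReflection α x}

lemma inv_mem_reflections (h0 : (0 : E) ∉ Φ) (hg : g ∈ reflections Φ) :
    g⁻¹ ∈ reflections Φ := by
  obtain ⟨α, hα, hg⟩ := hg
  refine ⟨α, hα, fun x => Perm.inv_eq_iff_eq.2 ?_⟩
  rw [hg, rootReflection_involutive (ne_of_mem_of_not_mem hα h0)]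

lemma map_add_of_mem_reflections (hg : g ∈ reflections Φ) (x y : E) :
    g (x + y) = g x + g y := by
  obtain ⟨α, -, hg⟩ := hg
  simp only [hg, ← rootReflectionₗ_apply, map_add]

lemma apply_mem_smul_corootLattice (h0 : (0 : E) ∉ Φ)
    (hrefl : ∀ α ∈ Φ, ∀ β ∈ Φ, rootReflection α β ∈ Φ) (hg : g ∈ reflections Φ) (c : ℝ)
    {v : E} (hv : v ∈ c • corootLattice Φ) : g v ∈ c • corootLattice Φ := by
  obtain ⟨α, hα, hg⟩ := hg
  obtain ⟨u, hu, rfl⟩ := (AddSubgroup.mem_smul_pointwise_iff_exists _ _ _).1 hv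
  rw [hg, ← rootReflectionₗ_apply, map_smul]
  refine AddSubgroup.smul_mem_pointwise_smul _ _ _ ?_
  refine (rootReflection_mem_closure_iff (ne_of_mem_of_not_mem hα h0) ?_).2 hu
  rintro _ ⟨β, hβ, rfl⟩
  exact ⟨_, hrefl α hα β hβ, rootReflection_coroot (ne_of_mem_of_not_mem hα h0) β⟩

lemma sub_mem_rootLattice_iff_of_mem_reflections (h0 : (0 : E) ∉ Φ)
    (hrefl : ∀ α ∈ Φ, ∀ β ∈ Φ, rootReflection α β ∈ Φ) {ρ : E}
    (hρ : ∀ α ∈ Φ, rootReflection α ρ - ρ ∈ rootLattice Φ) (hg : g ∈ reflections Φ) (x : E) :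
    g x - ρ ∈ rootLattice Φ ↔ x - ρ ∈ rootLattice Φ := by
  obtain ⟨α, hα, hg⟩ := hg
  have hsplit : g x - ρ = rootReflection α (x - ρ) + (rootReflection α ρ - ρ) := by
    rw [hg, ← rootReflectionₗ_apply α (x - ρ), map_sub, rootReflectionₗ_apply,
      rootReflectionₗ_apply]
    abel
  rw [hsplit, add_mem_cancel_right (hρ α hα)]
  exact rootReflection_mem_closure_iff (ne_of_mem_of_not_mem hα h0) (hrefl α hα)

end Reflections

end AffineWeylGroup

open AffineWeylGroup MulAction in
theorem affine_weyl_group_largest_subgroup_general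
    {E : Type*} [NormedAddCommGroup E] [InnerProductSpace ℝ E]
    (Φ Δ Pos : Finset E)
    (h0 : (0 : E) ∉ Φ)
    (hrefl : ∀ α ∈ Φ, ∀ β ∈ Φ, rootReflection α β ∈ Φ)
    (hbasis : LinearIndependent ℝ (fun a : Δ => (a : E)))
    (hdecomp : ∀ β ∈ Φ, ∃ c : Δ → ℝ, (β = ∑ a, c a • (a : E)) ∧
      ((∀ a, 0 ≤ c a) ∨ (∀ a, c a ≤ 0)))
    (hPos : ∀ β : E, β ∈ Pos ↔ β ∈ Φ ∧
      ∃ c : Δ → ℝ, (∀ a, 0 ≤ c a) ∧ β = ∑ a, c a • (a : E))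
    (ρ : E) (hρ : ρ = (2⁻¹ : ℝ) • ∑ β ∈ Pos, β)
    (D : ℕ) (hD : D = 1 ∨ Nat.Prime D)
    (hlen : ∀ β ∈ Φ, ⟪β, β⟫ = 2 ∨ ⟪β, β⟫ = 2 * D)
    (l l' : ℕ) (hl' : l' = if Odd l then l else l / 2)
    (Λr coΛr M Mdag : AddSubgroup E)
    (hΛr : Λr = AddSubgroup.closure (↑Φ : Set E))
    (hcoΛr : coΛr = AddSubgroup.closure {x : E | ∃ β ∈ Φ, x = (2 / ⟪β, β⟫) • β})
    (hM : M = if D ∣ l' then (l' : ℤ) • coΛr else (l' : ℤ) • Λr)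
    (hMdag : Mdag = ((l : ℝ) / 2) • coΛr)
    (Wl Wdag : Subgroup (Equiv.Perm E))
    (hWl : Wl = Subgroup.closure
      ({g : Equiv.Perm E | ∃ α ∈ Φ, ∀ x, g x = rootReflection α x}
        ∪ {g : Equiv.Perm E | ∃ m ∈ M, ∀ x, g x = x + m}))
    (hWdag : Wdag = Subgroup.closure
      ({g : Equiv.Perm E | ∃ α ∈ Φ, ∀ x, g x = rootReflection α x}
        ∪ {g : Equiv.Perm E | ∃ m ∈ Mdag, ∀ x, g x = x + m})) :
    Wl ≤ Wdag ∧
    (∀ g : Equiv.Perm E, g ∈ Wdag →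
      (g ∈ Wl ↔ ∀ μ : E, μ ∈ Λr → g (μ + ρ) - ρ ∈ Λr)) ∧
    (2 * D ∣ l → Wl = Wdag) := by
  subst hΛr hcoΛr hM hMdag hWl hWdag
  have hD0 : D ≠ 0 := by
    rcases hD with rfl | hp
    exacts [one_ne_zero, hp.ne_zero]
  have hΛC := rootLattice_le_corootLattice hD0 hlen
  have hCΛ : ∀ x ∈ corootLattice Φ, (D : ℤ) • x ∈ rootLattice Φ :=
    fun _ => zsmul_mem_rootLattice hD0 hlen
  have hdot : ∀ g ∈ reflections Φ, ∀ x, g x - ρ ∈ rootLattice Φ ↔ x - ρ ∈ rootLattice Φ :=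
    fun _ => sub_mem_rootLattice_iff_of_mem_reflections h0 hrefl
      fun _ => rootReflection_rho_sub_rho_mem h0 hrefl hbasis hdecomp hPos hρ
  refine ⟨affineSubgroup_mono ((levelLattice_le_zsmul hΛC).trans (zsmul_le_half_smul _ hl')),
    fun g hg => ⟨fun hgl μ hμ => ?_, fun h => ?_⟩, fun h2Dl => ?_⟩
  · exact (mem_stabilizer_set.1 (affineSubgroup_le_stabilizer hdot (levelLattice_le hCΛ) hgl)
      (μ + ρ)).2 (by simpa using hμ)
  · exact mem_affineSubgroup_of_sub_mem (fun _ => inv_mem_reflections h0)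
      (fun _ => map_add_of_mem_reflections)
      (fun _ hr _ => apply_mem_smul_corootLattice h0 hrefl hr _) hdot
      (half_smul_inf_le_levelLattice hl' hD hΛC hCΛ) hg (by simpa using h 0 (zero_mem _))
  · exact congrArg (affineSubgroup (reflections Φ)) (levelLattice_eq_half_smul hl' h2Dl)

/-- the affine Weyl group `W_l` (`= W ⋉ l'čΛ_r` if `D ∣ l'`,
`= W ⋉ l'Λ_r` otherwise) is exactly the subgroup of elements of
`W^† = W ⋉ (l/2)čΛ_r` that preserve the root lattice `Λ_r` under the translated
action `σ·λ = σ(λ+ρ) - ρ`; in particular `W_l = W^†` when `2D ∣ l`. -/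
theorem affine_weyl_group_largest_subgroup
    {E : Type*} [NormedAddCommGroup E] [InnerProductSpace ℝ E]
    (Φ Δ Pos : Finset E)
    (h0 : (0 : E) ∉ Φ)
    (hrefl : ∀ α ∈ Φ, ∀ β ∈ Φ, rootReflection α β ∈ Φ)
    (hint : ∀ α ∈ Φ, ∀ β ∈ Φ, ∃ n : ℤ, 2 * ⟪β, α⟫ / ⟪α, α⟫ = (n : ℝ))
    (hred : ∀ α ∈ Φ, ∀ c : ℝ, c • α ∈ Φ → c = 1 ∨ c = -1)
    (hirr : ¬ ∃ Φ₁ Φ₂ : Set E, Φ₁.Nonempty ∧ Φ₂.Nonempty ∧ Φ₁ ∪ Φ₂ = ↑Φ ∧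
      Disjoint Φ₁ Φ₂ ∧ ∀ α ∈ Φ₁, ∀ β ∈ Φ₂, ⟪α, β⟫ = 0)
    (hΔ : ↑Δ ⊆ (Φ : Set E))
    (hbasis : LinearIndependent ℝ (fun a : Δ => (a : E)))
    (hdecomp : ∀ β ∈ Φ, ∃ c : Δ → ℝ, (β = ∑ a, c a • (a : E)) ∧
      ((∀ a, 0 ≤ c a) ∨ (∀ a, c a ≤ 0)))
    (hPos : ∀ β : E, β ∈ Pos ↔ β ∈ Φ ∧
      ∃ c : Δ → ℝ, (∀ a, 0 ≤ c a) ∧ β = ∑ a, c a • (a : E))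
    (ρ : E) (hρ : ρ = (2⁻¹ : ℝ) • ∑ β ∈ Pos, β)
    (D : ℕ) (hD : D = 1 ∨ Nat.Prime D)
    (hlen : ∀ β ∈ Φ, ⟪β, β⟫ = 2 ∨ ⟪β, β⟫ = 2 * D)
    (l l' : ℕ) (hl : 0 < l) (hl' : l' = if Odd l then l else l / 2)
    (Λr coΛr M Mdag : AddSubgroup E)
    (hΛr : Λr = AddSubgroup.closure (↑Φ : Set E))
    (hcoΛr : coΛr = AddSubgroup.closure {x : E | ∃ β ∈ Φ, x = (2 / ⟪β, β⟫) • β})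
    (hM : M = if D ∣ l' then (l' : ℤ) • coΛr else (l' : ℤ) • Λr)
    (hMdag : Mdag = ((l : ℝ) / 2) • coΛr)
    (Wl Wdag : Subgroup (Equiv.Perm E))
    (hWl : Wl = Subgroup.closure
      ({g : Equiv.Perm E | ∃ α ∈ Φ, ∀ x, g x = rootReflection α x}
        ∪ {g : Equiv.Perm E | ∃ m ∈ M, ∀ x, g x = x + m}))
    (hWdag : Wdag = Subgroup.closure
      ({g : Equiv.Perm E | ∃ α ∈ Φ, ∀ x, g x = rootReflection α x}
        ∪ {g : Equiv.Perm E | ∃ m ∈ Mdag, ∀ x, g x = x + m})) :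
    Wl ≤ Wdag ∧
    (∀ g : Equiv.Perm E, g ∈ Wdag →
      (g ∈ Wl ↔ ∀ μ : E, μ ∈ Λr → g (μ + ρ) - ρ ∈ Λr)) ∧
    (2 * D ∣ l → Wl = Wdag) :=
  affine_weyl_group_largest_subgroup_general Φ Δ Pos h0 hrefl hbasis hdecomp hPos ρ hρ D hD hlen l
    l' hl' Λr coΛr M Mdag hΛr hcoΛr hM hMdag Wl Wdag hWl hWdag
end

section
/- Let ι be an isometry of the principal alcove C_l that maps weights to weights and is of the form ι(x) = σ(x+ρ) - ρ + t with σ ∈ W and t a weight (a translated-Weyl composed with a translation). Then for every σ' ∈ W_l, the conjugate ι^{-1} σ' ι lies in W_l. -/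
/-!
Put `A y = σ y + t`, so that `ι x + ρ = A (x + ρ)`: `A` is an affine isometry of the alcove
`C = C_l + ρ`, and the claim is that conjugation by `A` preserves the group generated by the
reflections `s_α` and the translations by `M`. Conjugating the translation by `m` gives the
translation by `σ⁻¹ m`, and `A⁻¹ s_α A` is the reflection in `σ⁻¹ α` followed by the translation
by `σ⁻¹ (s_α t - t) = -σ⁻¹ (⟨t, α^∨⟩ α)`, so everything reduces to `⟨t, α^∨⟩ α ∈ M`.

As `A` maps the vertex `0` of `C` to `t`, the point `t` is a vertex: either `0`, or the point where
the affine wall `⟪y, θ₀⟫ = l'` meets all walls `⟪y, α_i⟫ = 0` but one, say `i₀`. The linear part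
`σ` then maps the cone of `C` at `0`, with wall normals the simple roots, onto the cone at `t`,
with normals the simple roots `α_i` (`i ≠ i₀`) and `-θ₀`. Simplicial cones determine their wall
normals up to positive scalars, and roots only have the multiples `±1` among roots, so each
`σ α_i` is one of these normals, on which `⟪t, ·⟫` is `0` or `-l'`. Since every root is an
integral combination of simple roots, `⟪t, α⟫ ∈ l'ℤ` for every root `α`; with `t` a weight, this
puts `⟨t, α^∨⟩ α` in `M`.
-/

open scoped RealInnerProductSpace Pointwise

open Filter Topology

section

variable {E : Type*} [NormedAddCommGroup E] [InnerProductSpace ℝ E]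

section Reflection

lemma rootReflection_add (α x y : E) :
    rootReflection α (x + y) = rootReflection α x + rootReflection α y := by
  simp only [rootReflection, inner_add_left, mul_add, add_div, add_smul]
  abel

lemma rootReflection_sub_self (α x : E) :
    rootReflection α x - x = -((2 * ⟪x, α⟫ / ⟪α, α⟫) • α) := by
  simp [rootReflection]

lemma rootReflection_self {α : E} (hα : α ≠ 0) : rootReflection α α = -α := by
  have : ⟪α, α⟫ ≠ 0 := inner_self_ne_zero.2 hα
  rw [rootReflection, mul_div_assoc, div_self this, mul_one, two_smul]
  abel

lemma rootReflection_involutive (α : E) : Function.Involutive (rootReflection α) := by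
  intro x
  rcases eq_or_ne α 0 with rfl | hα
  · simp [rootReflection]
  have : ⟪α, α⟫ ≠ 0 := inner_self_ne_zero.2 hα
  simp only [rootReflection, inner_sub_left, real_inner_smul_left]
  rw [sub_sub, ← add_smul, sub_eq_self, smul_eq_zero]
  left
  field_simp
  ring

lemma inner_rootReflection_rootReflection (α x y : E) :
    ⟪rootReflection α x, rootReflection α y⟫ = ⟪x, y⟫ := by
  rcases eq_or_ne α 0 with rfl | hα
  · simp [rootReflection]
  have : ⟪α, α⟫ ≠ 0 := inner_self_ne_zero.2 hα
  simp only [rootReflection, inner_sub_left, inner_sub_right, real_inner_smul_left,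
    real_inner_smul_right, real_inner_comm α y]
  field_simp
  ring

lemma LinearIsometryEquiv.map_rootReflection (L : E ≃ₗᵢ[ℝ] E) (α x : E) :
    L (rootReflection α x) = rootReflection (L α) (L x) := by
  simp [rootReflection]

end Reflection

section Stabilizer

def innerStabilizer (Φ : Set E) : Subgroup (Equiv.Perm E) where
  carrier := {w | (∀ x y, ⟪w x, w y⟫ = ⟪x, y⟫) ∧ ∀ β, w β ∈ Φ ↔ β ∈ Φ}
  mul_mem' {w₁ w₂} h₁ h₂ := ⟨fun x y => (h₁.1 _ _).trans (h₂.1 x y),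
    fun β => (h₁.2 _).trans (h₂.2 β)⟩
  one_mem' := ⟨fun _ _ => rfl, fun _ => Iff.rfl⟩
  inv_mem' {w} h := ⟨fun x y => by simpa using (h.1 (w⁻¹ x) (w⁻¹ y)).symm,
    fun β => by simpa using (h.2 (w⁻¹ β)).symm⟩

noncomputable def linearIsometryEquivOfInner (w : Equiv.Perm E) (h : ∀ x y, ⟪w x, w y⟫ = ⟪x, y⟫) :
    E ≃ₗᵢ[ℝ] E :=
  LinearEquiv.isometryOfInner
    { w with
      map_add' := fun x y => ext_inner_left ℝ fun v => by
        obtain ⟨z, rfl⟩ := w.surjective v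
        simp only [Equiv.toFun_as_coe, inner_add_right, h]
      map_smul' := fun c x => ext_inner_left ℝ fun v => by
        obtain ⟨z, rfl⟩ := w.surjective v
        simp only [Equiv.toFun_as_coe, RingHom.id_apply, real_inner_smul_right, h] }
    h

@[simp] lemma coe_linearIsometryEquivOfInner (w : Equiv.Perm E)
    (h : ∀ x y, ⟪w x, w y⟫ = ⟪x, y⟫) : ⇑(linearIsometryEquivOfInner w h) = w := rfl

lemma closure_rootReflections_le_innerStabilizer {Φ : Set E}
    (hrefl : ∀ α ∈ Φ, ∀ β ∈ Φ, rootReflection α β ∈ Φ) :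
    Subgroup.closure {g : Equiv.Perm E | ∃ α ∈ Φ, ∀ x, g x = rootReflection α x} ≤
      innerStabilizer Φ := by
  refine (Subgroup.closure_le _).2 ?_
  rintro g ⟨α, hα, hg⟩
  refine ⟨fun x y => by rw [hg, hg, inner_rootReflection_rootReflection], fun β => ?_⟩
  rw [hg]
  refine ⟨fun h => ?_, hrefl α hα β⟩
  simpa [rootReflection_involutive α β] using hrefl α hα _ h

end Stabilizer

section InnerBasis

lemma exists_inner_eq_linearMap [FiniteDimensional ℝ E] (f : E →ₗ[ℝ] ℝ) :
    ∃ w : E, ∀ x, ⟪w, x⟫ = f x :=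
  ⟨(InnerProductSpace.toDual ℝ E).symm (LinearMap.toContinuousLinearMap f), fun x => by
    rw [InnerProductSpace.toDual_symm_apply, LinearMap.coe_toContinuousLinearMap']⟩

lemma real_inner_eq_sum_repr_mul {ι : Type*} [Fintype ι] (b : Module.Basis ι ℝ E) (x y : E) :
    ⟪x, y⟫ = ∑ i, b.repr y i * ⟪x, b i⟫ := by
  conv_lhs => rw [← b.sum_repr y]
  simp only [inner_sum, real_inner_smul_right]

end InnerBasis

section Roots

variable {Φ : Set E}

lemma real_inner_mul_inner_self_lt {x y : E} (hx : x ≠ 0) (hxy : ∀ r : ℝ, y ≠ r • x) :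
    ⟪x, y⟫ * ⟪x, y⟫ < ⟪x, x⟫ * ⟪y, y⟫ := by
  refine (real_inner_mul_inner_self_le x y).lt_of_ne fun h => ?_
  have hy : y ≠ 0 := by simpa using hxy 0
  have habs : ‖⟪x, y⟫‖ = ‖x‖ * ‖y‖ := by
    rw [Real.norm_eq_abs, ← sq_eq_sq₀ (abs_nonneg _) (by positivity), sq_abs, mul_pow,
      ← real_inner_self_eq_norm_sq, ← real_inner_self_eq_norm_sq, sq, h]
  obtain ⟨r, -, hr⟩ := (norm_inner_eq_norm_iff hx hy).1 habs
  exact hxy r hr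

lemma neg_mem_of_rootReflection_mem (h0 : (0 : E) ∉ Φ)
    (hrefl : ∀ α ∈ Φ, ∀ β ∈ Φ, rootReflection α β ∈ Φ) {β : E} (hβ : β ∈ Φ) : -β ∈ Φ := by
  simpa [rootReflection_self (ne_of_mem_of_not_mem hβ h0)] using hrefl β hβ β hβ

lemma sub_mem_of_inner_pos (h0 : (0 : E) ∉ Φ)
    (hrefl : ∀ α ∈ Φ, ∀ β ∈ Φ, rootReflection α β ∈ Φ)
    (hint : ∀ α ∈ Φ, ∀ β ∈ Φ, ∃ n : ℤ, 2 * ⟪β, α⟫ / ⟪α, α⟫ = (n : ℝ))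
    (hred : ∀ α ∈ Φ, ∀ c : ℝ, c • α ∈ Φ → c = 1 ∨ c = -1)
    {α β : E} (hα : α ∈ Φ) (hβ : β ∈ Φ) (hne : β ≠ α) (hpos : 0 < ⟪β, α⟫) : β - α ∈ Φ := by
  have hα0 : α ≠ 0 := ne_of_mem_of_not_mem hα h0
  have hβ0 : β ≠ 0 := ne_of_mem_of_not_mem hβ h0
  have hαα : 0 < ⟪α, α⟫ := real_inner_self_pos.2 hα0
  have hββ : 0 < ⟪β, β⟫ := real_inner_self_pos.2 hβ0
  have hlin : ∀ r : ℝ, β ≠ r • α := by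
    rintro r rfl
    rcases hred α hα r hβ with rfl | rfl
    · exact hne (one_smul ℝ α)
    · simp only [neg_smul, one_smul, inner_neg_left] at hpos
      linarith
  obtain ⟨p, hp⟩ := hint α hα β hβ
  obtain ⟨q, hq⟩ := hint β hβ α hα
  rw [real_inner_comm] at hq
  have hp0 : (0 : ℝ) < p := hp ▸ by positivity
  have hq0 : (0 : ℝ) < q := hq ▸ by positivity
  have hpq : (p : ℝ) * q < 4 := by
    rw [← hp, ← hq, div_mul_div_comm, div_lt_iff₀ (by positivity)]
    nlinarith [real_inner_mul_inner_self_lt hα0 hlin, real_inner_comm α β]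
  have hp1 : (0 : ℤ) < p := by exact_mod_cast hp0
  have hq1 : (0 : ℤ) < q := by exact_mod_cast hq0
  have hpq' : p * q < 4 := by exact_mod_cast hpq
  have hpq1 : p = 1 ∨ q = 1 := by
    by_contra! h
    have : 2 ≤ p := by omega
    have : 2 ≤ q := by omega
    nlinarith
  rcases hpq1 with rfl | rfl
  · have := hrefl α hα β hβ
    rwa [rootReflection, hp, Int.cast_one, one_smul] at this
  · have := neg_mem_of_rootReflection_mem h0 hrefl (hrefl β hβ α hα)
    rwa [rootReflection, real_inner_comm, hq, Int.cast_one, one_smul, neg_sub] at this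

end Roots

section SimpleRoots

variable {ι : Type*} [Fintype ι] {Φ : Set E}

lemma exists_inner_basis_pos (b : Module.Basis ι ℝ E) {β : E} (hβ : β ≠ 0)
    (hpos : ∀ i, 0 ≤ b.repr β i) : ∃ i, 0 < ⟪β, b i⟫ := by
  by_contra! h
  refine (real_inner_self_pos.2 hβ).not_ge ?_
  rw [real_inner_eq_sum_repr_mul b]
  exact Finset.sum_nonpos fun i _ => mul_nonpos_of_nonneg_of_nonpos (hpos i) (h i)

lemma eq_basis_of_repr_eq_zero (hred : ∀ α ∈ Φ, ∀ c : ℝ, c • α ∈ Φ → c = 1 ∨ c = -1)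
    (b : Module.Basis ι ℝ E) (hbΦ : ∀ i, b i ∈ Φ) {β : E} (hβ : β ∈ Φ) {i : ι}
    (hpos : 0 ≤ b.repr β i) (hzero : ∀ k ≠ i, b.repr β k = 0) : β = b i := by
  classical
  have hβi : β = b.repr β i • b i := by
    conv_lhs => rw [← b.sum_repr β]
    exact Finset.sum_eq_single i (fun k _ hk => by rw [hzero k hk, zero_smul]) (by simp)
  rcases hred (b i) (hbΦ i) _ (hβi ▸ hβ) with h | h
  · rwa [h, one_smul] at hβi
  · linarith

theorem mem_closure_range_basis_of_mem (hΦ : Φ.Finite) (h0 : (0 : E) ∉ Φ)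
    (hrefl : ∀ α ∈ Φ, ∀ β ∈ Φ, rootReflection α β ∈ Φ)
    (hint : ∀ α ∈ Φ, ∀ β ∈ Φ, ∃ n : ℤ, 2 * ⟪β, α⟫ / ⟪α, α⟫ = (n : ℝ))
    (hred : ∀ α ∈ Φ, ∀ c : ℝ, c • α ∈ Φ → c = 1 ∨ c = -1)
    (b : Module.Basis ι ℝ E) (hbΦ : ∀ i, b i ∈ Φ)
    (hsign : ∀ β ∈ Φ, (∀ i, 0 ≤ b.repr β i) ∨ ∀ i, b.repr β i ≤ 0) {β : E} (hβ : β ∈ Φ) :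
    β ∈ AddSubgroup.closure (Set.range b) := by
  classical
  let height : E → ℝ := fun x => ∑ i, b.repr x i
  have hwf : Φ.WellFoundedOn fun x y => height x < height y :=
    Set.wellFoundedOn_image.1 (hΦ.image height).wellFoundedOn
  suffices hpos : ∀ β ∈ Φ, (∀ i, 0 ≤ b.repr β i) → β ∈ AddSubgroup.closure (Set.range b) by
    rcases hsign β hβ with h | h
    · exact hpos β hβ h
    · simpa using AddSubgroup.neg_mem _
        (hpos (-β) (neg_mem_of_rootReflection_mem h0 hrefl hβ) (by simpa using h))
  intro β hβ
  refine hwf.induction hβ (P := fun β => (∀ i, 0 ≤ b.repr β i) → _) ?_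
  intro β hβ IH hpos
  by_cases hsimple : β ∈ Set.range b
  · exact AddSubgroup.subset_closure hsimple
  obtain ⟨i, hi⟩ := exists_inner_basis_pos b (ne_of_mem_of_not_mem hβ h0) hpos
  have hγ : β - b i ∈ Φ :=
    sub_mem_of_inner_pos h0 hrefl hint hred (hbΦ i) hβ (fun h => hsimple ⟨i, h.symm⟩) hi
  have hrepr : ∀ k, b.repr (β - b i) k = b.repr β k - if i = k then 1 else 0 := by
    simp [Finsupp.single_apply]
  have hγpos : ∀ k, 0 ≤ b.repr (β - b i) k := by
    refine (hsign _ hγ).resolve_right fun hneg => hsimple ⟨i, ?_⟩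
    refine (eq_basis_of_repr_eq_zero hred b hbΦ hβ (hpos i) fun k hk => ?_).symm
    have := hneg k
    rw [hrepr, if_neg (Ne.symm hk), sub_zero] at this
    exact le_antisymm this (hpos k)
  have hheight : height (β - b i) < height β := by
    simp only [height, hrepr, Finset.sum_sub_distrib, Finset.sum_ite_eq, Finset.mem_univ,
      if_true]
    linarith
  simpa using add_mem (IH _ hγ hheight hγpos) (AddSubgroup.subset_closure ⟨i, rfl⟩)

end SimpleRoots

lemma exists_basis_closure_range_of_simpleRoots {Φ Δ : Finset E} (h0 : (0 : E) ∉ Φ)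
    (hrefl : ∀ α ∈ Φ, ∀ β ∈ Φ, rootReflection α β ∈ Φ)
    (hint : ∀ α ∈ Φ, ∀ β ∈ Φ, ∃ n : ℤ, 2 * ⟪β, α⟫ / ⟪α, α⟫ = (n : ℝ))
    (hred : ∀ α ∈ Φ, ∀ c : ℝ, c • α ∈ Φ → c = 1 ∨ c = -1) (hΔ : ↑Δ ⊆ (Φ : Set E))
    (hbasis : LinearIndependent ℝ (fun a : Δ => (a : E)))
    (hspan : Submodule.span ℝ (↑Δ : Set E) = ⊤)
    (hdecomp : ∀ β ∈ Φ, ∃ c : Δ → ℝ, (β = ∑ a, c a • (a : E)) ∧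
      ((∀ a, 0 ≤ c a) ∨ (∀ a, c a ≤ 0))) :
    ∃ b : Module.Basis Δ ℝ E, (∀ a, b a = a) ∧
      ∀ β ∈ Φ, β ∈ AddSubgroup.closure (Set.range b) := by
  let b := Module.Basis.mk hbasis (by simp [hspan])
  have hb : ∀ a, b a = a := Module.Basis.mk_apply _ _
  refine ⟨b, hb, fun β hβ => mem_closure_range_basis_of_mem Φ.finite_toSet h0 hrefl hint hred b
    (fun a => by simpa [hb] using hΔ a.2) (fun β hβ => ?_) hβ⟩
  obtain ⟨c, rfl, hc⟩ := hdecomp β hβ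
  simpa only [← hb, b.repr_sum_self] using hc

section Alcove

variable {ι : Type*}

/-- For the simple roots `b` and `θ = θ₀`, this is the principal alcove `C_l` translated by `ρ`. -/
def alcove (b : ι → E) (θ : E) (l : ℝ) : Set E :=
  {y | (∀ i, 0 ≤ ⟪y, b i⟫) ∧ ⟪y, θ⟫ ≤ l}

lemma zero_mem_alcove (b : ι → E) {θ : E} {l : ℝ} (hl : 0 ≤ l) : (0 : E) ∈ alcove b θ l := by
  simp [alcove, hl]

variable [Fintype ι] {b : ι → E} {θ t w : E} {l : ℝ}

lemma eventually_add_smul_mem_alcove (ht : t ∈ alcove b θ l)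
    (hw : ∀ i, ⟪t, b i⟫ = 0 → 0 ≤ ⟪w, b i⟫) (hθ : ⟪t, θ⟫ = l → ⟪w, θ⟫ ≤ 0) :
    ∀ᶠ ε in 𝓝[>] (0 : ℝ), t + ε • w ∈ alcove b θ l := by
  have hlim : ∀ v : E, Tendsto (fun ε : ℝ => ⟪t + ε • w, v⟫) (𝓝[>] 0) (𝓝 ⟪t, v⟫) := by
    intro v
    have : Continuous fun ε : ℝ => ⟪t + ε • w, v⟫ := by fun_prop
    simpa using (this.tendsto 0).mono_left nhdsWithin_le_nhds
  refine (eventually_all.2 fun i => ?_).and ?_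
  · rcases (ht.1 i).eq_or_lt with h | h
    · filter_upwards [self_mem_nhdsWithin] with ε hε
      rw [inner_add_left, ← h, zero_add, real_inner_smul_left]
      exact mul_nonneg (le_of_lt hε) (hw i h.symm)
    · filter_upwards [(hlim (b i)).eventually (lt_mem_nhds h)] with ε hε using hε.le
  · rcases ht.2.eq_or_lt with h | h
    · filter_upwards [self_mem_nhdsWithin] with ε hε
      rw [inner_add_left, h, real_inner_smul_left]
      nlinarith [hθ h, Set.mem_Ioi.1 hε]
    · filter_upwards [(hlim θ).eventually (gt_mem_nhds h)] with ε hε using hε.le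

lemma exists_pos_add_smul_mem_alcove_iff (ht : t ∈ alcove b θ l) :
    (∃ ε : ℝ, 0 < ε ∧ t + ε • w ∈ alcove b θ l) ↔
      (∀ i, ⟪t, b i⟫ = 0 → 0 ≤ ⟪w, b i⟫) ∧ (⟪t, θ⟫ = l → ⟪w, θ⟫ ≤ 0) := by
  refine ⟨fun ⟨ε, hε, hmem⟩ => ⟨fun i hi => ?_, fun hθ => ?_⟩, fun ⟨hw, hθ⟩ => ?_⟩
  · have := hmem.1 i
    rw [inner_add_left, hi, zero_add, real_inner_smul_left] at this
    exact (mul_nonneg_iff_of_pos_left hε).1 this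
  · have := hmem.2
    rw [inner_add_left, hθ, real_inner_smul_left] at this
    nlinarith
  · obtain ⟨ε, hmem, hε⟩ :=
      ((eventually_add_smul_mem_alcove ht hw hθ).and self_mem_nhdsWithin).exists
    exact ⟨ε, hε, hmem⟩

lemma eq_zero_of_forall_add_sub_mem_alcove
    (hvert : ∀ v, t + v ∈ alcove b θ l → t - v ∈ alcove b θ l → v = 0) (ht : t ∈ alcove b θ l)
    (hw : ∀ i, ⟪t, b i⟫ = 0 → ⟪w, b i⟫ = 0) (hθ : ⟪t, θ⟫ = l → ⟪w, θ⟫ = 0) : w = 0 := by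
  have hpos := eventually_add_smul_mem_alcove (w := w) ht (fun i hi => (hw i hi).ge)
    fun h => (hθ h).le
  have hneg := eventually_add_smul_mem_alcove (w := -w) ht
    (fun i hi => by rw [inner_neg_left, hw i hi, neg_zero]) fun h => by
      rw [inner_neg_left, hθ h, neg_zero]
  obtain ⟨ε, ⟨hplus, hminus⟩, hε⟩ := ((hpos.and hneg).and self_mem_nhdsWithin).exists
  rw [smul_neg, ← sub_eq_add_neg] at hminus
  exact (smul_eq_zero.1 (hvert _ hplus hminus)).resolve_left (ne_of_gt hε)

end Alcove

section Vertex

variable {ι : Type*} [Fintype ι] [FiniteDimensional ℝ E]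

theorem eq_zero_or_exists_of_forall_add_sub_mem_alcove (b : Module.Basis ι ℝ E) {θ t : E}
    {l : ℝ} (hl : 0 < l) (ht : t ∈ alcove b θ l)
    (hvert : ∀ v, t + v ∈ alcove b θ l → t - v ∈ alcove b θ l → v = 0) :
    t = 0 ∨ ∃ i₀, 0 < ⟪t, b i₀⟫ ∧ (∀ j ≠ i₀, ⟪t, b j⟫ = 0) ∧ ⟪t, θ⟫ = l := by
  classical
  refine or_iff_not_imp_left.2 fun ht0 => ?_
  have htθ : ⟪t, θ⟫ = l := by
    by_contra h
    exact ht0 (eq_zero_of_forall_add_sub_mem_alcove hvert ht (fun i hi => hi) fun h' => absurd h' h)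
  set c := b.repr θ
  obtain ⟨i₀, -, hi₀⟩ : ∃ i₀ ∈ Finset.univ, 0 < c i₀ * ⟪t, b i₀⟫ := by
    refine Finset.exists_lt_of_sum_lt ?_
    rw [Finset.sum_const_zero, ← real_inner_eq_sum_repr_mul, htθ]
    exact hl
  have hti₀ : 0 < ⟪t, b i₀⟫ := ((ht.1 i₀).lt_of_ne fun h => by simp [← h] at hi₀)
  have hc : 0 < c i₀ := pos_of_mul_pos_left hi₀ hti₀.le
  refine ⟨i₀, hti₀, fun j hj => ?_, htθ⟩
  by_contra htj
  obtain ⟨w, hw⟩ := exists_inner_eq_linearMap (b.coord j - (c j / c i₀) • b.coord i₀)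
  have hwb : ∀ k, ⟪w, b k⟫ = (if k = j then 1 else 0) - c j / c i₀ * if k = i₀ then 1 else 0 := by
    simp [hw, Finsupp.single_apply]
  have hw0 : w = 0 := by
    refine eq_zero_of_forall_add_sub_mem_alcove hvert ht (fun k hk => ?_) fun _ => ?_
    · rw [hwb, if_neg (by rintro rfl; exact htj hk), if_neg (by rintro rfl; exact hti₀.ne' hk)]
      ring
    · rw [hw]
      simp only [LinearMap.sub_apply, LinearMap.smul_apply, Module.Basis.coord_apply, smul_eq_mul]
      field_simp
      ring
  simpa [hw0, hj] using hwb j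

end Vertex

section Cones

variable {ι : Type*} [Fintype ι] [FiniteDimensional ℝ E]

lemma Module.Basis.repr_nonneg_iff (b : Module.Basis ι ℝ E) (x : E) :
    (∀ i, 0 ≤ b.repr x i) ↔ ∀ w : E, (∀ i, 0 ≤ ⟪w, b i⟫) → 0 ≤ ⟪w, x⟫ := by
  classical
  refine ⟨fun hx w hw => ?_, fun h i => ?_⟩
  · rw [real_inner_eq_sum_repr_mul b]
    exact Finset.sum_nonneg fun i _ => mul_nonneg (hx i) (hw i)
  · obtain ⟨w, hw⟩ := exists_inner_eq_linearMap (b.coord i)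
    have := h w fun k => by rw [hw, Module.Basis.coord_apply, b.repr_self,
      Finsupp.single_apply]; split_ifs <;> norm_num
    rwa [hw] at this

theorem exists_pos_smul_eq_of_walls_eq (b g : Module.Basis ι ℝ E)
    (h : ∀ w : E, (∀ i, 0 ≤ ⟪w, b i⟫) ↔ ∀ i, 0 ≤ ⟪w, g i⟫) (j : ι) :
    ∃ k, ∃ μ : ℝ, 0 < μ ∧ g k = μ • b j := by
  classical
  have hcone : ∀ x, (∀ i, 0 ≤ b.repr x i) ↔ ∀ i, 0 ≤ g.repr x i := fun x => by
    simp only [b.repr_nonneg_iff, g.repr_nonneg_iff, h]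
  have hP : ∀ k, 0 ≤ g.repr (b j) k :=
    (hcone _).1 fun i => by rw [b.repr_self, Finsupp.single_apply]; split_ifs <;> norm_num
  have hQ : ∀ k i, 0 ≤ b.repr (g k) i :=
    fun k => (hcone _).2 fun i => by rw [g.repr_self, Finsupp.single_apply]; split_ifs <;> norm_num
  obtain ⟨k, hk⟩ : ∃ k, g.repr (b j) k ≠ 0 := by
    by_contra! h0
    exact b.ne_zero j (g.repr.map_eq_zero_iff.1 (Finsupp.ext h0))
  -- `b j = ∑ₖ Pₖ g k` and `g k = ∑ᵢ Qᵢₖ b i` with `P, Q ≥ 0`, so `Q i k = 0` for `i ≠ j`.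
  have hoff : ∀ i ≠ j, b.repr (g k) i = 0 := by
    intro i hi
    have hsum : ∑ k', g.repr (b j) k' * b.repr (g k') i = 0 := by
      have := congrArg (fun x => b.repr x i) (g.sum_repr (b j))
      simp only [map_sum, map_smul, Finsupp.coe_finsetSum, Finset.sum_apply,
        Finsupp.smul_apply, smul_eq_mul, b.repr_self, Finsupp.single_apply] at this
      rwa [if_neg hi.symm] at this
    have := (Finset.sum_eq_zero_iff_of_nonneg fun k' _ => mul_nonneg (hP k') (hQ k' i)).1 hsum k
      (Finset.mem_univ k)
    exact (mul_eq_zero.1 this).resolve_left hk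
  have hgk : g k = b.repr (g k) j • b j := by
    conv_lhs => rw [← b.sum_repr (g k)]
    exact Finset.sum_eq_single j (fun i _ hi => by rw [hoff i hi, zero_smul]) (by simp)
  refine ⟨k, _, (hQ k j).lt_of_ne fun h0 => g.ne_zero k ?_, hgk⟩
  rw [hgk, ← h0, zero_smul]

lemma Module.Basis.exists_coe_eq_update (b : Module.Basis ι ℝ E) [DecidableEq ι] {i : ι} {v : E}
    (hv : b.repr v i ≠ 0) : ∃ b' : Module.Basis ι ℝ E, ⇑b' = Function.update b i v := by
  have hli : LinearIndependent ℝ (Function.update b i v) :=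
    b.linearIndependent.update i v ⟨1, one_mem _, b.repr v, mem_nonZeroDivisors_of_ne_zero hv,
      by rw [one_smul, b.linearCombination_repr]⟩
  exact ⟨basisOfLinearIndependentOfCardEqFinrank' _ hli (Module.finrank_eq_card_basis b).symm,
    coe_basisOfLinearIndependentOfCardEqFinrank' _ _ _⟩

end Cones

section AlcoveIsometry

lemma Set.BijOn.comp_sub_add {G : Type*} [AddGroup G] {f : G → G} {C : Set G} (ρ : G)
    (hf : Set.BijOn f ((· + ρ) ⁻¹' C) ((· + ρ) ⁻¹' C)) :
    Set.BijOn (fun y => f (y - ρ) + ρ) C C := by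
  have hshift := (Equiv.addRight ρ).bijective.bijOn_preimage (t := C)
  exact hshift.comp (hf.comp (by simpa [sub_eq_add_neg] using Equiv.bijOn_symm.2 hshift))

lemma bijOn_alcove_of_bijOn {Δ : Finset E} {b : Module.Basis Δ ℝ E} (hb : ∀ a, b a = a)
    {θ ρ t : E} {l : ℝ} {f ι : E → E} (hι : ∀ x, ι x = f (x + ρ) - ρ + t)
    (hιC : Set.BijOn ι {x | (∀ α ∈ Δ, 0 ≤ ⟪x + ρ, α⟫) ∧ ⟪x + ρ, θ⟫ ≤ l}
      {x | (∀ α ∈ Δ, 0 ≤ ⟪x + ρ, α⟫) ∧ ⟪x + ρ, θ⟫ ≤ l}) :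
    Set.BijOn (fun y => f y + t) (alcove b θ l) (alcove b θ l) := by
  have hC : {x : E | (∀ α ∈ Δ, 0 ≤ ⟪x + ρ, α⟫) ∧ ⟪x + ρ, θ⟫ ≤ l} = (· + ρ) ⁻¹' alcove b θ l := by
    ext x
    simp [alcove, hb]
  convert (hC ▸ hιC).comp_sub_add ρ using 2 with y
  rw [hι, sub_add_cancel]
  abel

variable {ι : Type*} {b : Module.Basis ι ℝ E} {θ t : E} {l : ℝ} {σ : E ≃ₗᵢ[ℝ] E}

lemma add_mem_alcove_iff_of_bijOn
    (hA : Set.BijOn (fun y => σ y + t) (alcove b θ l) (alcove b θ l)) {y : E} :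
    σ y + t ∈ alcove b θ l ↔ y ∈ alcove b θ l := by
  refine ⟨fun h => ?_, fun h => hA.mapsTo h⟩
  obtain ⟨z, hz, hzy⟩ := hA.surjOn h
  rwa [← σ.injective (add_right_cancel hzy)]

lemma eq_zero_of_add_sub_mem_alcove_of_bijOn
    (hA : Set.BijOn (fun y => σ y + t) (alcove b θ l) (alcove b θ l)) {v : E}
    (hplus : t + v ∈ alcove b θ l) (hminus : t - v ∈ alcove b θ l) : v = 0 := by
  have h₁ : σ (σ.symm v) + t ∈ alcove b θ l := by simpa [add_comm] using hplus
  have h₂ : σ (-σ.symm v) + t ∈ alcove b θ l := by simpa [sub_eq_neg_add] using hminus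
  rw [add_mem_alcove_iff_of_bijOn hA] at h₁ h₂
  have : σ.symm v = 0 := InnerProductSpace.ext_inner_right_basis b fun i => by
    have := h₂.1 i
    rw [inner_neg_left] at this
    rw [inner_zero_left]
    linarith [h₁.1 i]
  simpa using congrArg σ this

variable [Fintype ι]

lemma forall_inner_nonneg_iff_of_bijOn (hl : 0 < l)
    (hA : Set.BijOn (fun y => σ y + t) (alcove b θ l) (alcove b θ l)) (w : E) :
    (∀ i, 0 ≤ ⟪w, b i⟫) ↔
      (∀ i, ⟪t, b i⟫ = 0 → 0 ≤ ⟪σ w, b i⟫) ∧ (⟪t, θ⟫ = l → ⟪σ w, θ⟫ ≤ 0) := by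
  have ht : t ∈ alcove b θ l := by simpa using hA.mapsTo (zero_mem_alcove b hl.le)
  calc (∀ i, 0 ≤ ⟪w, b i⟫)
      ↔ ∃ ε : ℝ, 0 < ε ∧ 0 + ε • w ∈ alcove b θ l := by
        rw [exists_pos_add_smul_mem_alcove_iff (zero_mem_alcove b hl.le)]
        simp [hl.ne]
    _ ↔ ∃ ε : ℝ, 0 < ε ∧ t + ε • σ w ∈ alcove b θ l := by
        refine exists_congr fun ε => and_congr_right fun _ => ?_
        rw [zero_add, ← add_mem_alcove_iff_of_bijOn hA, map_smul, add_comm]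
    _ ↔ _ := exists_pos_add_smul_mem_alcove_iff ht

variable [FiniteDimensional ℝ E]

lemma inner_map_basis_mem_zmultiples_of_bijOn {Φ : Set E}
    (hred : ∀ α ∈ Φ, ∀ c : ℝ, c • α ∈ Φ → c = 1 ∨ c = -1) (hbΦ : ∀ i, b i ∈ Φ)
    (hθΦ : -θ ∈ Φ) (hσΦ : ∀ β, σ β ∈ Φ ↔ β ∈ Φ) (hl : 0 < l)
    (hA : Set.BijOn (fun y => σ y + t) (alcove b θ l) (alcove b θ l)) {i₀ : ι}
    (hti₀ : 0 < ⟪t, b i₀⟫) (htj : ∀ j ≠ i₀, ⟪t, b j⟫ = 0) (htθ : ⟪t, θ⟫ = l) (j : ι) :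
    ⟪t, σ (b j)⟫ ∈ AddSubgroup.zmultiples l := by
  classical
  have hc : b.repr θ i₀ ≠ 0 := by
    intro h
    have := real_inner_eq_sum_repr_mul b t θ
    rw [Finset.sum_eq_single i₀ (fun j _ hj => by rw [htj j hj, mul_zero]) (by simp), h,
      zero_mul, htθ] at this
    exact hl.ne' this
  -- The walls through `t` have normals `b i` for `i ≠ i₀`, and `-θ`.
  obtain ⟨f, hf⟩ := b.exists_coe_eq_update (i := i₀) (v := -θ) (by simpa using hc)
  have hwalls : ∀ w, (∀ i, 0 ≤ ⟪w, b i⟫) ↔ ∀ i, 0 ≤ ⟪w, f.map σ.symm.toLinearEquiv i⟫ := by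
    intro w
    simp only [forall_inner_nonneg_iff_of_bijOn hl hA, Module.Basis.map_apply,
      LinearIsometryEquiv.coe_toLinearEquiv, ← LinearIsometryEquiv.inner_map_eq_flip, hf]
    refine ⟨fun ⟨hb, hθ⟩ i => ?_, fun h => ⟨fun i hi => ?_, fun _ => ?_⟩⟩
    · rcases eq_or_ne i i₀ with rfl | hi
      · simpa using hθ htθ
      · simpa [hi] using hb i (htj i hi)
    · have hi₀ : i ≠ i₀ := by rintro rfl; exact hti₀.ne' hi
      simpa [hi₀] using h i
    · simpa using h i₀
  obtain ⟨k, μ, hμ, hk⟩ := exists_pos_smul_eq_of_walls_eq b _ hwalls j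
  have hfk : f k = μ • σ (b j) := by
    rw [← map_smul, ← hk]
    simp
  have hfkΦ : f k ∈ Φ := by
    rcases eq_or_ne k i₀ with rfl | hk
    · simpa [hf] using hθΦ
    · simpa [hf, hk] using hbΦ k
  obtain rfl : μ = 1 :=
    (hred _ ((hσΦ _).2 (hbΦ j)) μ (hfk ▸ hfkΦ)).resolve_right (by linarith)
  rw [one_smul] at hfk
  rw [← hfk, hf]
  rcases eq_or_ne k i₀ with rfl | hk
  · simp [htθ]
  · simp [hk, htj k hk]

theorem inner_mem_zmultiples_of_bijOn {Φ : Set E}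
    (hred : ∀ α ∈ Φ, ∀ c : ℝ, c • α ∈ Φ → c = 1 ∨ c = -1) (hbΦ : ∀ i, b i ∈ Φ)
    (hθΦ : -θ ∈ Φ) (hZ : ∀ β ∈ Φ, β ∈ AddSubgroup.closure (Set.range b))
    (hσΦ : ∀ β, σ β ∈ Φ ↔ β ∈ Φ) (hl : 0 < l)
    (hA : Set.BijOn (fun y => σ y + t) (alcove b θ l) (alcove b θ l)) {α : E} (hα : α ∈ Φ) :
    ⟪t, α⟫ ∈ AddSubgroup.zmultiples l := by
  have ht : t ∈ alcove b θ l := by simpa using hA.mapsTo (zero_mem_alcove b hl.le)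
  rcases eq_zero_or_exists_of_forall_add_sub_mem_alcove b hl ht
    (fun _ => eq_zero_of_add_sub_mem_alcove_of_bijOn hA) with rfl | ⟨i₀, hti₀, htj, htθ⟩
  · simp
  have hle : AddSubgroup.closure (Set.range b) ≤ (AddSubgroup.zmultiples l).comap
      ((innerₛₗ ℝ t).comp σ.toLinearEquiv.toLinearMap).toAddMonoidHom :=
    (AddSubgroup.closure_le _).2 <| Set.range_subset_iff.2
      (inner_map_basis_mem_zmultiples_of_bijOn hred hbΦ hθΦ hσΦ hl hA hti₀ htj htθ)
  simpa using hle (hZ _ ((hσΦ (σ.symm α)).1 (by simpa using hα)))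

end AlcoveIsometry

section AffineWeyl

lemma AddSubgroup.map_mem_closure {G : Type*} [AddGroup G] (f : G →+ G) {S : Set G}
    (hS : ∀ x ∈ S, f x ∈ S) {x : G} (hx : x ∈ AddSubgroup.closure S) :
    f x ∈ AddSubgroup.closure S :=
  (AddSubgroup.closure_le ((AddSubgroup.closure S).comap f)).2
    (fun y hy => AddSubgroup.subset_closure (hS y hy)) hx

lemma AddSubgroup.map_mem_zsmul_pointwise {G : Type*} [AddCommGroup G] (f : G →+ G)
    {H : AddSubgroup G} (hH : ∀ x ∈ H, f x ∈ H) (n : ℤ) {x : G} (hx : x ∈ n • H) :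
    f x ∈ n • H := by
  rw [AddSubgroup.mem_smul_pointwise_iff_exists] at hx ⊢
  obtain ⟨y, hy, rfl⟩ := hx
  exact ⟨f y, hH y hy, (map_zsmul f n y).symm⟩

variable {Φ : Set E} {D l' : ℕ} {Λr coΛr M : AddSubgroup E}

lemma map_mem_of_mem_translationLattice (w : E ≃ₗᵢ[ℝ] E) (hw : ∀ β ∈ Φ, w β ∈ Φ)
    (hΛr : Λr = AddSubgroup.closure Φ)
    (hcoΛr : coΛr = AddSubgroup.closure {x : E | ∃ β ∈ Φ, x = (2 / ⟪β, β⟫) • β})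
    (hM : M = if D ∣ l' then (l' : ℤ) • coΛr else (l' : ℤ) • Λr) {m : E} (hm : m ∈ M) :
    w m ∈ M := by
  have hroots : ∀ x ∈ Λr, w x ∈ Λr := fun x hx => by
    subst hΛr
    exact AddSubgroup.map_mem_closure w.toLinearEquiv.toAddMonoidHom hw hx
  have hcoroots : ∀ x ∈ coΛr, w x ∈ coΛr := fun x hx => by
    subst hcoΛr
    refine AddSubgroup.map_mem_closure w.toLinearEquiv.toAddMonoidHom ?_ hx
    rintro _ ⟨β, hβ, rfl⟩
    exact ⟨w β, hw β hβ, by simp⟩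
  subst hM
  split_ifs at hm ⊢
  · exact AddSubgroup.map_mem_zsmul_pointwise w.toLinearEquiv.toAddMonoidHom hcoroots _ hm
  · exact AddSubgroup.map_mem_zsmul_pointwise w.toLinearEquiv.toAddMonoidHom hroots _ hm

lemma Int.natCast_dvd_of_mul_div_eq {p m : ℕ} (hp : p.Prime) (hpm : ¬p ∣ m) {n k : ℤ}
    (h : (n : ℝ) * m / p = k) : (p : ℤ) ∣ n := by
  have hp0 : (p : ℝ) ≠ 0 := by exact_mod_cast hp.ne_zero
  have hnk : n * m = k * p := by
    rw [div_eq_iff hp0] at h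
    exact_mod_cast h
  exact ((Nat.prime_iff_prime_int.1 hp).dvd_mul.1 ⟨k, by rw [hnk, mul_comm]⟩).resolve_right
    fun h => hpm (Int.natCast_dvd_natCast.1 h)

lemma smul_mem_translationLattice_of_inner_mem_zmultiples (hD : D = 1 ∨ D.Prime) {α t : E}
    (hα : α ∈ Φ) (hlen : ⟪α, α⟫ = 2 ∨ ⟪α, α⟫ = 2 * D)
    (htα : ∃ k : ℤ, ⟪t, (2 / ⟪α, α⟫) • α⟫ = k) (hl : ⟪t, α⟫ ∈ AddSubgroup.zmultiples (l' : ℝ))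
    (hΛr : Λr = AddSubgroup.closure Φ)
    (hcoΛr : coΛr = AddSubgroup.closure {x : E | ∃ β ∈ Φ, x = (2 / ⟪β, β⟫) • β})
    (hM : M = if D ∣ l' then (l' : ℤ) • coΛr else (l' : ℤ) • Λr) :
    (2 * ⟪t, α⟫ / ⟪α, α⟫) • α ∈ M := by
  obtain ⟨n, hn⟩ := AddSubgroup.mem_zmultiples_iff.1 hl
  rw [zsmul_eq_mul] at hn
  have hsmul : ∀ (k : ℤ) (x : E), k • x = (k : ℝ) • x :=
    fun k x => (Int.cast_smul_eq_zsmul ℝ k x).symm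
  subst hM
  split_ifs with hDl <;> rw [AddSubgroup.mem_smul_pointwise_iff_exists]
  · refine ⟨n • (2 / ⟪α, α⟫) • α, AddSubgroup.zsmul_mem _ (hcoΛr ▸ AddSubgroup.subset_closure
      ⟨α, hα, rfl⟩) n, ?_⟩
    rw [hsmul, hsmul, smul_smul, smul_smul, ← hn]
    congr 1
    push_cast
    ring
  have hαΛr : α ∈ Λr := hΛr ▸ AddSubgroup.subset_closure hα
  rcases hlen with h2 | h2D
  · refine ⟨n • α, AddSubgroup.zsmul_mem _ hαΛr n, ?_⟩
    rw [hsmul, hsmul, smul_smul, ← hn, h2]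
    congr 1
    push_cast
    ring
  -- For a long root, `t` being a weight forces `D ∣ n`.
  have hDp : D.Prime := hD.resolve_left fun h => hDl (h ▸ one_dvd l')
  have hD0 : (D : ℝ) ≠ 0 := by exact_mod_cast hDp.ne_zero
  obtain ⟨k, hk⟩ := htα
  rw [real_inner_smul_right, ← hn, h2D] at hk
  obtain ⟨n', rfl⟩ := Int.natCast_dvd_of_mul_div_eq (n := n) (k := k) hDp hDl (by
    rw [← hk]
    field_simp)
  refine ⟨n' • α, AddSubgroup.zsmul_mem _ hαΛr n', ?_⟩
  rw [hsmul, hsmul, smul_smul, ← hn, h2D]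
  congr 1
  push_cast
  field_simp

theorem conj_mem_closure_reflections_translations (σ : E ≃ₗᵢ[ℝ] E)
    (hσΦ : ∀ β, σ β ∈ Φ ↔ β ∈ Φ) (hσM : ∀ m ∈ M, σ.symm m ∈ M) {t : E}
    (htM : ∀ α ∈ Φ, (2 * ⟪t, α⟫ / ⟪α, α⟫) • α ∈ M) (A : Equiv.Perm E)
    (hA : ∀ y, A y = σ y + t) {g : Equiv.Perm E}
    (hg : g ∈ Subgroup.closure ({g : Equiv.Perm E | ∃ α ∈ Φ, ∀ x, g x = rootReflection α x}
        ∪ {g : Equiv.Perm E | ∃ m ∈ M, ∀ x, g x = x + m})) :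
    A⁻¹ * g * A ∈ Subgroup.closure ({g : Equiv.Perm E | ∃ α ∈ Φ, ∀ x, g x = rootReflection α x}
        ∪ {g : Equiv.Perm E | ∃ m ∈ M, ∀ x, g x = x + m}) := by
  set W := Subgroup.closure ({g : Equiv.Perm E | ∃ α ∈ Φ, ∀ x, g x = rootReflection α x}
    ∪ {g : Equiv.Perm E | ∃ m ∈ M, ∀ x, g x = x + m})
  have hrefl : ∀ β ∈ Φ, (rootReflection_involutive β).toPerm ∈ W :=
    fun β hβ => Subgroup.subset_closure (Or.inl ⟨β, hβ, fun _ => rfl⟩)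
  have htrans : ∀ m ∈ M, Equiv.addRight m ∈ W :=
    fun m hm => Subgroup.subset_closure (Or.inr ⟨m, hm, fun _ => rfl⟩)
  refine (Subgroup.closure_le (W.comap (MulAut.conj A⁻¹).toMonoidHom)).2 ?_ hg
  rintro g (⟨α, hα, hg⟩ | ⟨m, hm, hg⟩) <;> show A⁻¹ * g * A⁻¹⁻¹ ∈ W <;> rw [inv_inv]
  · have hm : σ.symm (rootReflection α t - t) ∈ M := by
      rw [rootReflection_sub_self]
      exact hσM _ (M.neg_mem (htM α hα))
    have hβ : σ.symm α ∈ Φ := (hσΦ _).1 (by simpa using hα)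
    convert W.mul_mem (htrans _ hm) (hrefl _ hβ) using 1
    ext y
    simp only [Equiv.Perm.mul_apply, Equiv.Perm.inv_eq_iff_eq, hg, hA,
      Function.Involutive.coe_toPerm, Equiv.coe_addRight, map_add, σ.map_rootReflection,
      σ.apply_symm_apply, rootReflection_add]
    abel
  · convert htrans _ (hσM m hm) using 1
    ext y
    simp only [Equiv.Perm.mul_apply, Equiv.Perm.inv_eq_iff_eq, hg, hA, Equiv.coe_addRight,
      map_add, σ.apply_symm_apply]
    abel

end AffineWeyl

end

theorem alcove_isometry_normalizes_affine_weyl_general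
    {E : Type*} [NormedAddCommGroup E] [InnerProductSpace ℝ E]
    (Φ Δ : Finset E)
    (h0 : (0 : E) ∉ Φ)
    (hrefl : ∀ α ∈ Φ, ∀ β ∈ Φ, rootReflection α β ∈ Φ)
    (hint : ∀ α ∈ Φ, ∀ β ∈ Φ, ∃ n : ℤ, 2 * ⟪β, α⟫ / ⟪α, α⟫ = (n : ℝ))
    (hred : ∀ α ∈ Φ, ∀ c : ℝ, c • α ∈ Φ → c = 1 ∨ c = -1)
    (hΔ : ↑Δ ⊆ (Φ : Set E))
    (hbasis : LinearIndependent ℝ (fun a : Δ => (a : E)))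
    (hspan : Submodule.span ℝ (↑Δ : Set E) = ⊤)
    (hdecomp : ∀ β ∈ Φ, ∃ c : Δ → ℝ, (β = ∑ a, c a • (a : E)) ∧
      ((∀ a, 0 ≤ c a) ∨ (∀ a, c a ≤ 0)))
    (ρ : E)
    (D : ℕ) (hD : D = 1 ∨ Nat.Prime D)
    (hlen : ∀ β ∈ Φ, ⟪β, β⟫ = 2 ∨ ⟪β, β⟫ = 2 * D)
    (θ φ : E) (hθ : θ ∈ Φ) (hφ : φ ∈ Φ)
    (l' : ℕ) (hl' : 0 < l')
    (Λr coΛr M : AddSubgroup E)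
    (hΛr : Λr = AddSubgroup.closure (↑Φ : Set E))
    (hcoΛr : coΛr = AddSubgroup.closure {x : E | ∃ β ∈ Φ, x = (2 / ⟪β, β⟫) • β})
    (hM : M = if D ∣ l' then (l' : ℤ) • coΛr else (l' : ℤ) • Λr)
    (W Wl : Subgroup (Equiv.Perm E))
    (hW : W = Subgroup.closure
      {g : Equiv.Perm E | ∃ α ∈ Φ, ∀ x, g x = rootReflection α x})
    (hWl : Wl = Subgroup.closure
      ({g : Equiv.Perm E | ∃ α ∈ Φ, ∀ x, g x = rootReflection α x}
        ∪ {g : Equiv.Perm E | ∃ m ∈ M, ∀ x, g x = x + m}))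
    (θ₀ : E) (hθ₀ : θ₀ = if D ∣ l' then θ else φ)
    (Cl : Set E)
    (hCl : Cl = {x : E | (∀ α ∈ Δ, 0 ≤ ⟪x + ρ, α⟫) ∧ ⟪x + ρ, θ₀⟫ ≤ l'})
    (Λ : Set E)
    (hΛ : Λ = {x : E | ∀ β ∈ Φ, ∃ k : ℤ, ⟪x, (2 / ⟪β, β⟫) • β⟫ = (k : ℝ)})
    (ι : E → E) (σ : Equiv.Perm E) (hσ : σ ∈ W) (t : E) (htΛ : t ∈ Λ)
    (hι : ∀ x : E, ι x = σ (x + ρ) - ρ + t)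
    (hιCl : Set.BijOn ι Cl Cl) :
    ∀ g ∈ Wl, ∃ g' ∈ Wl, ∀ x : E, ι (g' (x + ρ) - ρ) = g (ι x + ρ) - ρ := by
  subst hW hWl hCl hΛ
  obtain ⟨b, hb, hZ⟩ := exists_basis_closure_range_of_simpleRoots h0 hrefl hint hred hΔ hbasis
    hspan hdecomp
  have := Module.Finite.of_basis b
  have hbΦ : ∀ a, b a ∈ Φ := fun a => by simpa [hb] using hΔ a.2
  obtain ⟨hσinner, hσΦ⟩ := closure_rootReflections_le_innerStabilizer hrefl hσ
  let L := linearIsometryEquivOfInner σ hσinner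
  have hA : Set.BijOn (fun y => L y + t) (alcove b θ₀ l') (alcove b θ₀ l') :=
    bijOn_alcove_of_bijOn hb hι hιCl
  have hθ₀Φ : θ₀ ∈ Φ := by rw [hθ₀]; split_ifs <;> assumption
  have htM : ∀ α ∈ Φ, (2 * ⟪t, α⟫ / ⟪α, α⟫) • α ∈ M := fun α hα =>
    smul_mem_translationLattice_of_inner_mem_zmultiples hD hα (hlen α hα) (htΛ α hα)
      (inner_mem_zmultiples_of_bijOn hred hbΦ (neg_mem_of_rootReflection_mem h0 hrefl hθ₀Φ) hZ
        hσΦ (by exact_mod_cast hl') hA hα) hΛr hcoΛr hM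
  have hLM : ∀ m ∈ M, L.symm m ∈ M := fun m =>
    map_mem_of_mem_translationLattice L.symm
      (fun β hβ => (hσΦ _).1 <| by rwa [show σ (L.symm β) = β from L.apply_symm_apply β])
      hΛr hcoΛr hM
  let A : Equiv.Perm E := L.toEquiv.trans (Equiv.addRight t)
  intro g hg
  refine ⟨A⁻¹ * g * A,
    conj_mem_closure_reflections_translations L hσΦ hLM htM A (fun _ => rfl) hg, fun x => ?_⟩
  have hιA : ∀ x, ι x = A (x + ρ) - ρ := fun x => (hι x).trans (sub_add_eq_add_sub _ _ _)
  simp [hιA]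

/-- let `ι` be an isometry of the principal alcove `C_l` mapping
weights to weights, of the form `ι(x) = σ(x+ρ) - ρ + t` with `σ ∈ W` and `t` a
weight.  Then conjugation by `ι` preserves the affine Weyl group: for every
`σ' ∈ W_l` (acting by the translated action), `ι⁻¹ σ' ι ∈ W_l`. -/
theorem alcove_isometry_normalizes_affine_weyl
    {E : Type*} [NormedAddCommGroup E] [InnerProductSpace ℝ E]
    (Φ Δ Pos : Finset E)
    (h0 : (0 : E) ∉ Φ)
    (hrefl : ∀ α ∈ Φ, ∀ β ∈ Φ, rootReflection α β ∈ Φ)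
    (hint : ∀ α ∈ Φ, ∀ β ∈ Φ, ∃ n : ℤ, 2 * ⟪β, α⟫ / ⟪α, α⟫ = (n : ℝ))
    (hred : ∀ α ∈ Φ, ∀ c : ℝ, c • α ∈ Φ → c = 1 ∨ c = -1)
    (hirr : ¬ ∃ Φ₁ Φ₂ : Set E, Φ₁.Nonempty ∧ Φ₂.Nonempty ∧ Φ₁ ∪ Φ₂ = ↑Φ ∧
      Disjoint Φ₁ Φ₂ ∧ ∀ α ∈ Φ₁, ∀ β ∈ Φ₂, ⟪α, β⟫ = 0)
    (hΔ : ↑Δ ⊆ (Φ : Set E))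
    (hbasis : LinearIndependent ℝ (fun a : Δ => (a : E)))
    (hspan : Submodule.span ℝ (↑Δ : Set E) = ⊤)
    (hdecomp : ∀ β ∈ Φ, ∃ c : Δ → ℝ, (β = ∑ a, c a • (a : E)) ∧
      ((∀ a, 0 ≤ c a) ∨ (∀ a, c a ≤ 0)))
    (hPos : ∀ β : E, β ∈ Pos ↔ β ∈ Φ ∧
      ∃ c : Δ → ℝ, (∀ a, 0 ≤ c a) ∧ β = ∑ a, c a • (a : E))
    (ρ : E) (hρ : ρ = (2⁻¹ : ℝ) • ∑ β ∈ Pos, β)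
    (D : ℕ) (hD : D = 1 ∨ Nat.Prime D)
    (hlen : ∀ β ∈ Φ, ⟪β, β⟫ = 2 ∨ ⟪β, β⟫ = 2 * D)
    (θ φ : E) (hθ : θ ∈ Φ) (hφ : φ ∈ Φ)
    (hθlong : ⟪θ, θ⟫ = 2 * D) (hφshort : ⟪φ, φ⟫ = 2)
    (l' : ℕ) (hl' : 0 < l')
    (Λr coΛr M : AddSubgroup E)
    (hΛr : Λr = AddSubgroup.closure (↑Φ : Set E))
    (hcoΛr : coΛr = AddSubgroup.closure {x : E | ∃ β ∈ Φ, x = (2 / ⟪β, β⟫) • β})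
    (hM : M = if D ∣ l' then (l' : ℤ) • coΛr else (l' : ℤ) • Λr)
    (W Wl : Subgroup (Equiv.Perm E))
    (hW : W = Subgroup.closure
      {g : Equiv.Perm E | ∃ α ∈ Φ, ∀ x, g x = rootReflection α x})
    (hWl : Wl = Subgroup.closure
      ({g : Equiv.Perm E | ∃ α ∈ Φ, ∀ x, g x = rootReflection α x}
        ∪ {g : Equiv.Perm E | ∃ m ∈ M, ∀ x, g x = x + m}))
    (θ₀ : E) (hθ₀ : θ₀ = if D ∣ l' then θ else φ)
    (Cl : Set E)
    (hCl : Cl = {x : E | (∀ α ∈ Δ, 0 ≤ ⟪x + ρ, α⟫) ∧ ⟪x + ρ, θ₀⟫ ≤ l'})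
    (Λ : Set E)
    (hΛ : Λ = {x : E | ∀ β ∈ Φ, ∃ k : ℤ, ⟪x, (2 / ⟪β, β⟫) • β⟫ = (k : ℝ)})
    (ι : E → E) (σ : Equiv.Perm E) (hσ : σ ∈ W) (t : E) (htΛ : t ∈ Λ)
    (hι : ∀ x : E, ι x = σ (x + ρ) - ρ + t)
    (hιCl : Set.BijOn ι Cl Cl)
    (hιΛ : ∀ x ∈ Λ, ι x ∈ Λ) :
    ∀ g ∈ Wl, ∃ g' ∈ Wl, ∀ x : E, ι (g' (x + ρ) - ρ) = g (ι x + ρ) - ρ :=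
  alcove_isometry_normalizes_affine_weyl_general Φ Δ h0 hrefl hint hred hΔ hbasis hspan hdecomp ρ D
    hD hlen θ φ hθ hφ l' hl' Λr coΛr M hΛr hcoΛr hM W Wl hW hWl θ₀ hθ₀ Cl hCl Λ hΛ ι σ hσ t htΛ hι
    hιCl
end
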